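/- arXiv:1503.08876 — 8 statements merged into one kernel-verified Lean document; each statement's English description precedes it below -/
import Mathlib

section
/- For all integers n > m > 0, the binomial coefficient satisfies C(n, m) < 2^(n · h(m/n)), where h(x) = -x·log₂(x) - (1-x)·log₂(1-x) is the binary entropy function. -/
/-!
Put `p = m / n`. The binomial expansion of `(p + (1 - p)) ^ n = 1` contains the term
`C(n, m) p ^ m (1 - p) ^ (n - m)` and the positive term `(1 - p) ^ n`, so
`C(n, m) < (p ^ m (1 - p) ^ (n - m))⁻¹`, and the right-hand side is exactly `2 ^ (n h(p))`.
-/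

/-- Binary entropy function. -/
noncomputable def binEnt (x : ℝ) : ℝ := -x * Real.logb 2 x - (1 - x) * Real.logb 2 (1 - x)

open Finset Real

theorem choose_mul_pow_mul_pow_lt_one {p : ℝ} (hp0 : 0 ≤ p) (hp1 : p < 1) {n m : ℕ}
    (hm : m ≠ 0) (hmn : m ≤ n) :
    (n.choose m : ℝ) * p ^ m * (1 - p) ^ (n - m) < 1 := by
  have hterm : ∀ k, 0 ≤ (n.choose k : ℝ) * p ^ k * (1 - p) ^ (n - k) := fun k => by
    have : 0 ≤ 1 - p := by linarith
    positivity
  calc (n.choose m : ℝ) * p ^ m * (1 - p) ^ (n - m)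
      < ∑ k ∈ range (n + 1), (n.choose k : ℝ) * p ^ k * (1 - p) ^ (n - k) := by
        refine single_lt_sum (i := m) (j := 0) hm.symm (mem_range.2 (by omega))
          (mem_range.2 (by omega)) ?_ fun k _ _ => hterm k
        simpa using pow_pos (sub_pos.2 hp1) n
    _ = (p + (1 - p)) ^ n := by
        rw [add_pow]
        exact sum_congr rfl fun k _ => by ring
    _ = 1 := by simp

theorem two_rpow_mul_binEnt {p : ℝ} (hp0 : 0 < p) (hp1 : p < 1) (x : ℝ) :
    (2 : ℝ) ^ (x * binEnt p) = (p ^ (x * p) * (1 - p) ^ (x * (1 - p)))⁻¹ := by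
  have hq : 0 < 1 - p := sub_pos.2 hp1
  have hlog : x * binEnt p = -logb 2 (p ^ (x * p) * (1 - p) ^ (x * (1 - p))) := by
    rw [logb_mul (rpow_pos_of_pos hp0 _).ne' (rpow_pos_of_pos hq _).ne',
      logb_rpow_eq_mul_logb_of_pos hp0, logb_rpow_eq_mul_logb_of_pos hq, binEnt]
    ring
  rw [hlog, rpow_neg zero_le_two, rpow_logb two_pos (by norm_num) (by positivity)]

theorem binom_entropy_bound (n m : ℕ) (hm : 0 < m) (hmn : m < n) :
    (n.choose m : ℝ) < 2 ^ ((n : ℝ) * binEnt ((m : ℝ) / n)) := by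
  have hn : (0 : ℝ) < n := by exact_mod_cast hm.trans hmn
  set p : ℝ := (m : ℝ) / n
  have hp0 : 0 < p := by positivity
  have hp1 : p < 1 := (div_lt_one hn).2 (by exact_mod_cast hmn)
  have hnp : (n : ℝ) * p = m := mul_div_cancel₀ _ hn.ne'
  have hnq : (n : ℝ) * (1 - p) = ((n - m : ℕ) : ℝ) := by
    rw [Nat.cast_sub hmn.le, mul_sub, mul_one, hnp]
  rw [two_rpow_mul_binEnt hp0 hp1, hnp, hnq, rpow_natCast, rpow_natCast,
    ← one_div, lt_div_iff₀ (by positivity), ← mul_assoc]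
  exact choose_mul_pow_mul_pow_lt_one hp0.le hp1 hm.ne' hmn.le
end

section
/- A covering array CA(N; t, k, v) exists for all sufficiently large N; more precisely, for fixed t, v ≥ 2 there exists a constant D such that for all k ≥ t, CAN(t, k, v) ≤ D · log₂ k, i.e. CAN(t,k,v) = O(log₂ k). -/
/-!
The probabilistic method, phrased as counting. For injective columns `cols` and a pattern `tup`,
exactly `v ^ (k - t)` of the `v ^ k` possible rows show `tup` in the columns `cols`, so a union
bound over the at most `k ^ t * v ^ t` pairs `(cols, tup)` leaves fewer than `(v ^ k) ^ N`
non-covering arrays with `N` rows as soon as `k ^ t * m * (1 - 1 / m) ^ N < 1`, where `m = v ^ t`.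
Since `(1 - 1 / m) ^ m < 1 / 2` (Bernoulli), `N = m * (t * (log₂ k + 1) + m)` rows suffice.
-/

/-- `A` is a covering array of strength `t`: every `t` distinct columns cover all
`t`-tuples over the alphabet among their rows. -/
def IsCoveringArray {N k v : ℕ} (t : ℕ) (A : Fin N → Fin k → Fin v) : Prop :=
  ∀ cols : Fin t → Fin k, Function.Injective cols →
    ∀ tup : Fin t → Fin v, ∃ r : Fin N, ∀ i, A r (cols i) = tup i

/-- `CAN t k v` is the minimum number of rows of a covering array of strength `t`
with `k` columns over a `v`-letter alphabet. -/
noncomputable def CAN (t k v : ℕ) : ℕ :=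
  sInf {N | ∃ A : Fin N → Fin k → Fin v, IsCoveringArray t A}

open Finset Function

section Counting

variable {ρ ι α β : Type*} [Fintype ρ] [DecidableEq ρ] [Fintype ι]
  [Fintype α] [DecidableEq α] [Fintype β] [DecidableEq β] {cols : ι → α}

lemma card_filter_forall_apply_eq (hcols : Injective cols) (tup : ι → β) :
    #{g : α → β | ∀ i, g (cols i) = tup i} =
      Fintype.card β ^ (Fintype.card α - Fintype.card ι) := by
  have hpi : ({g : α → β | ∀ i, g (cols i) = tup i} : Finset _) =
      Fintype.piFinset (extend cols (fun i => {tup i}) fun _ => univ) := by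
    ext g
    simp only [mem_filter, mem_univ, true_and, Fintype.mem_piFinset]
    refine ⟨fun hg x => ?_, fun hg i => by simpa [hcols.extend_apply] using hg (cols i)⟩
    by_cases hx : ∃ i, cols i = x
    · obtain ⟨i, rfl⟩ := hx
      simp [hcols.extend_apply, hg i]
    · simp [extend_apply' _ _ _ hx]
  have hcard (x : α) : #(extend cols (fun i => ({tup i} : Finset β)) (fun _ => univ) x) =
      if x ∈ univ.map ⟨cols, hcols⟩ then 1 else Fintype.card β := by
    by_cases hx : ∃ i, cols i = x
    · obtain ⟨i, rfl⟩ := hx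
      simp [hcols.extend_apply]
    · simp_all
  rw [hpi, Fintype.card_piFinset]
  simp only [hcard]
  rw [prod_ite, prod_const_one, one_mul, prod_const, filter_notMem_eq_sdiff,
    ← compl_eq_univ_sdiff, card_compl, card_map, card_univ]

lemma card_filter_forall_not_forall_apply_eq (hcols : Injective cols) (tup : ι → β) :
    #{A : ρ → α → β | ∀ r, ¬ ∀ i, A r (cols i) = tup i} =
      (Fintype.card β ^ Fintype.card α - Fintype.card β ^ (Fintype.card α - Fintype.card ι)) ^
        Fintype.card ρ := by
  have hpi : ({A : ρ → α → β | ∀ r, ¬ ∀ i, A r (cols i) = tup i} : Finset _) =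
      Fintype.piFinset fun _ => {g | ¬ ∀ i, g (cols i) = tup i} := by
    ext A
    simp
  rw [hpi, Fintype.card_piFinset, prod_const, card_univ, filter_not,
    card_sdiff_of_subset (filter_subset _ _), card_filter_forall_apply_eq hcols, card_univ,
    Fintype.card_fun]

end Counting

open Classical in
lemma card_filter_not_isCoveringArray_le (t N k v : ℕ) :
    #{A : Fin N → Fin k → Fin v | ¬ IsCoveringArray t A} ≤
      k ^ t * v ^ t * (v ^ k - v ^ (k - t)) ^ N := by
  set P : Finset ((Fin t → Fin k) × (Fin t → Fin v)) := univ.filter Injective ×ˢ univ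
  have hsub : ({A | ¬ IsCoveringArray t A} : Finset (Fin N → Fin k → Fin v)) ⊆
      P.biUnion fun p =>
        ({A | ∀ r, ¬ ∀ i, A r (p.1 i) = p.2 i} : Finset (Fin N → Fin k → Fin v)) := by
    intro A hA
    simp only [IsCoveringArray, mem_filter, mem_univ, true_and, not_forall, exists_prop] at hA
    obtain ⟨cols, hcols, tup, hmiss⟩ := hA
    simp only [mem_biUnion, mem_filter, mem_univ, true_and]
    exact ⟨(cols, tup), by simp [P, hcols], not_exists.1 hmiss⟩
  have hP : #P ≤ k ^ t * v ^ t := by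
    simpa [P] using
      Nat.mul_le_mul_right (v ^ t) (card_filter_le (univ : Finset (Fin t → Fin k)) Injective)
  refine (card_le_card hsub).trans <| (card_biUnion_le_card_mul _ _ _ fun p hp => ?_).trans
    (Nat.mul_le_mul_right _ hP)
  have hinj : Injective p.1 := by simpa [P] using (mem_product.1 hp).1
  simpa using (card_filter_forall_not_forall_apply_eq (ρ := Fin N) (β := Fin v) hinj p.2).le

lemma CAN_le_of_mul_pow_lt {t k v N : ℕ}
    (hN : k ^ t * v ^ t * (v ^ k - v ^ (k - t)) ^ N < (v ^ k) ^ N) :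
    CAN t k v ≤ N := by
  classical
  have hex : ∃ A : Fin N → Fin k → Fin v, IsCoveringArray t A := by
    by_contra! h
    have hcard := card_filter_not_isCoveringArray_le t N k v
    rw [filter_true_of_mem fun A _ => h A, card_univ, Fintype.card_fun, Fintype.card_fun,
      Fintype.card_fin, Fintype.card_fin, Fintype.card_fin] at hcard
    omega
  exact Nat.sInf_le hex

lemma pow_mul_add_le_succ_pow_mul (a n : ℕ) : a ^ n * (a + n) ≤ (a + 1) ^ n * a := by
  induction n with
  | zero => simp
  | succ n ih =>
    have hle : a ^ n ≤ (a + 1) ^ n := Nat.pow_le_pow_left (Nat.le_succ a) n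
    calc a ^ (n + 1) * (a + (n + 1)) = a * (a ^ n * (a + n)) + a * a ^ n := by ring
      _ ≤ a * ((a + 1) ^ n * a) + a * (a + 1) ^ n := by gcongr
      _ = (a + 1) ^ (n + 1) * a := by ring

lemma two_mul_pow_lt_succ_pow (a : ℕ) : 2 * a ^ (a + 1) < (a + 1) ^ (a + 1) := by
  rcases Nat.eq_zero_or_pos a with rfl | ha
  · simp
  refine Nat.lt_of_mul_lt_mul_right (a := a) ?_
  calc 2 * a ^ (a + 1) * a = a ^ (a + 1) * (a + a) := by ring
    _ < a ^ (a + 1) * (a + (a + 1)) := by gcongr; omega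
    _ ≤ (a + 1) ^ (a + 1) * a := pow_mul_add_le_succ_pow_mul a (a + 1)

lemma CAN_le_mul_log (t : ℕ) {k v : ℕ} (htk : t ≤ k) (hv : 1 ≤ v) :
    CAN t k v ≤ v ^ t * (t * (Nat.log 2 k + 1) + v ^ t) := by
  obtain ⟨a, ha⟩ : ∃ a, v ^ t = a + 1 := Nat.exists_eq_add_of_le' (Nat.one_le_pow _ _ hv)
  set s := t * (Nat.log 2 k + 1) + v ^ t
  apply CAN_le_of_mul_pow_lt
  have hk : k ^ t * (a + 1) ≤ 2 ^ s :=
    calc k ^ t * (a + 1) ≤ (2 ^ (Nat.log 2 k + 1)) ^ t * 2 ^ (a + 1) :=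
          Nat.mul_le_mul (Nat.pow_le_pow_left (Nat.lt_pow_succ_log_self one_lt_two k).le t)
            Nat.lt_two_pow_self.le
      _ = 2 ^ s := by rw [← pow_mul, ← pow_add, ← ha, mul_comm (Nat.log 2 k + 1)]
  have hsplit : v ^ k = v ^ (k - t) * (a + 1) := by rw [← ha, ← pow_add, Nat.sub_add_cancel htk]
  have hs : s ≠ 0 := by positivity
  have hcore : k ^ t * (a + 1) * a ^ ((a + 1) * s) < (a + 1) ^ ((a + 1) * s) :=
    calc k ^ t * (a + 1) * a ^ ((a + 1) * s) ≤ 2 ^ s * a ^ ((a + 1) * s) := by gcongr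
      _ = (2 * a ^ (a + 1)) ^ s := by rw [mul_pow, pow_mul]
      _ < ((a + 1) ^ (a + 1)) ^ s := Nat.pow_lt_pow_left (two_mul_pow_lt_succ_pow a) hs
      _ = (a + 1) ^ ((a + 1) * s) := (pow_mul _ _ _).symm
  have hw : 0 < v ^ (k - t) := by positivity
  have hdiff : v ^ (k - t) * (a + 1) - v ^ (k - t) = v ^ (k - t) * a := by
    rw [Nat.mul_add_one, Nat.add_sub_cancel]
  rw [hsplit, ha, hdiff]
  calc k ^ t * (a + 1) * (v ^ (k - t) * a) ^ ((a + 1) * s)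
      = (v ^ (k - t)) ^ ((a + 1) * s) * (k ^ t * (a + 1) * a ^ ((a + 1) * s)) := by ring
    _ < (v ^ (k - t)) ^ ((a + 1) * s) * (a + 1) ^ ((a + 1) * s) := by gcongr
    _ = (v ^ (k - t) * (a + 1)) ^ ((a + 1) * s) := (mul_pow _ _ _).symm

theorem CAN_upper_log (t v : ℕ) (ht : 2 ≤ t) (hv : 2 ≤ v) :
    ∃ D : ℝ, ∀ k : ℕ, t ≤ k → (CAN t k v : ℝ) ≤ D * Real.logb 2 k := by
  refine ⟨(v ^ t * (2 * t + v ^ t) : ℕ), fun k htk => ?_⟩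
  have hlog : 1 ≤ Nat.log 2 k := Nat.le_log_of_pow_le one_lt_two (by omega)
  have hCAN : CAN t k v ≤ v ^ t * (2 * t + v ^ t) * Nat.log 2 k :=
    calc CAN t k v ≤ v ^ t * (t * (Nat.log 2 k + 1) + v ^ t) := CAN_le_mul_log t htk (by omega)
      _ ≤ v ^ t * ((2 * t + v ^ t) * Nat.log 2 k) := by
        gcongr; nlinarith [Nat.mul_le_mul_left t hlog, Nat.mul_le_mul_left (v ^ t) hlog]
      _ = v ^ t * (2 * t + v ^ t) * Nat.log 2 k := (mul_assoc _ _ _).symm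
  calc (CAN t k v : ℝ) ≤ ((v ^ t * (2 * t + v ^ t) : ℕ) : ℝ) * (Nat.log 2 k : ℕ) := by
        exact_mod_cast hCAN
    _ ≤ _ := by gcongr; exact Real.natLog_le_logb k 2
end

section
/- Let t, v ≥ 2 be integers. Then limsup_{k→∞} CAN(t,k,v)/log₂ k ≤ v(t−1) / log₂(v^(t−1)/(v^(t−1)−1)). -/
/-!
Let `B` be a uniformly random `M × 2k` array over `Fin v` and let `A`
consist of the rows `B r + a` for all rows `r` of `B` and all constants `a`, so `A` has `vM` rows.
`A` covers a tuple `x` on distinct columns `c` as soon as some row of `B` agrees with `x` on `c` up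
to an additive constant, which for a single row has probability `v^{-(t-1)}` rather than `v^{-t}`.
Hence the expected number of uncovered pairs `(c, x)` is at most `(2kv)^t (1 - v^{-(t-1)})^M`,
which is at most `k` once `M ≈ ((t-1) log k + O(1)) / log (V / (V - 1))` with `V = v^(t-1)`.
Deleting the first column of every uncovered pair leaves a covering array with `k` columns and
`vM` rows; dividing by `log₂ k` and letting `k → ∞` gives the bound.
-/

open Filter

open Finset

section Counting

variable {ι κ : Type*} [Fintype ι] [DecidableEq ι] [Fintype κ] [DecidableEq κ]

theorem card_filter_comp_mul_card {α : Type*} [Fintype α] {c : ι → κ}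
    (hc : Function.Injective c) (P : (ι → α) → Prop) [DecidablePred P] :
    #{w : κ → α | P (w ∘ c)} * Fintype.card (ι → α) =
      #{f | P f} * Fintype.card (κ → α) := by
  let e : (κ → α) ≃ (ι → α) × ({j // j ∉ Set.range c} → α) :=
    (Equiv.piEquivPiSubtypeProd (· ∈ Set.range c) fun _ => α).trans
      ((Equiv.arrowCongr (Equiv.ofInjective c hc).symm (Equiv.refl α)).prodCongr (Equiv.refl _))
  have he : ∀ w, (e w).1 = w ∘ c := fun w => by ext i; simp [e]
  have hsplit : {w // P (w ∘ c)} ≃ {f // P f} × ({j // j ∉ Set.range c} → α) :=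
    (e.subtypeEquiv fun w => by rw [he]).trans Equiv.prodSubtypeFstEquivSubtypeProd
  rw [← Fintype.card_subtype, ← Fintype.card_subtype, Fintype.card_congr hsplit,
    Fintype.card_congr e, Fintype.card_prod, Fintype.card_prod]
  ring

variable {G : Type*} [Fintype G] [AddGroup G] [DecidableEq G] [Nonempty ι]

theorem card_filter_exists_add_eq {c : ι → κ} (hc : Function.Injective c) (x : ι → G) :
    #{w : κ → G | ∃ a, ∀ i, w (c i) + a = x i} * Fintype.card G ^ Fintype.card ι =
      Fintype.card G * Fintype.card G ^ Fintype.card κ := by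
  have hpatterns : #{f : ι → G | ∃ a, ∀ i, f i + a = x i} = Fintype.card G := by
    have himage : ({f : ι → G | ∃ a, ∀ i, f i + a = x i} : Finset _) =
        univ.image fun a i => x i - a := by
      ext f
      simp only [mem_filter, mem_univ, true_and, mem_image, funext_iff]
      exact exists_congr fun a => forall_congr' fun i => by rw [sub_eq_iff_eq_add, eq_comm]
    rw [himage, card_image_of_injective _ fun a b hab => ?_, card_univ]
    obtain ⟨i⟩ := ‹Nonempty ι›
    simpa using congrFun hab i
  have := card_filter_comp_mul_card (α := G) hc fun f => ∃ a, ∀ i, f i + a = x i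
  simpa [Fintype.card_fun, hpatterns] using this

theorem card_filter_not_exists_add_eq {c : ι → κ} (hc : Function.Injective c) (x : ι → G) :
    (#{w : κ → G | ¬ ∃ a, ∀ i, w (c i) + a = x i} : ℝ) =
      (1 - 1 / (Fintype.card G : ℝ) ^ (Fintype.card ι - 1)) *
        Fintype.card G ^ Fintype.card κ := by
  have hpow : Fintype.card G ^ Fintype.card ι =
      Fintype.card G * Fintype.card G ^ (Fintype.card ι - 1) := by
    rw [← pow_succ', Nat.sub_add_cancel Fintype.card_pos]
  have hshifts : (#{w : κ → G | ∃ a, ∀ i, w (c i) + a = x i} : ℝ) *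
      (Fintype.card G : ℝ) ^ (Fintype.card ι - 1) =
        (Fintype.card G : ℝ) ^ Fintype.card κ := by
    exact_mod_cast Nat.eq_of_mul_eq_mul_left Fintype.card_pos
      (by rw [← card_filter_exists_add_eq hc x, hpow]; ring)
  rw [filter_not, card_sdiff_of_subset (filter_subset _ _), card_univ,
    Nat.cast_sub (card_le_univ _), Fintype.card_fun]
  push_cast
  rw [← hshifts]
  field_simp

end Counting

theorem exists_card_filter_mem_mul_le_sum {Ω X : Type*} [Fintype Ω] [DecidableEq Ω] [Nonempty Ω]
    (s : Finset X) (E : X → Finset Ω) :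
    ∃ ω, #{x ∈ s | ω ∈ E x} * Fintype.card Ω ≤ ∑ x ∈ s, #(E x) := by
  have hdouble : ∑ ω, #{x ∈ s | ω ∈ E x} = ∑ x ∈ s, #(E x) := by
    simp_rw [card_filter]
    rw [sum_comm]
    simp
  obtain ⟨ω, -, hω⟩ := exists_le_of_sum_le univ_nonempty
    (f := fun ω => #{x ∈ s | ω ∈ E x} * Fintype.card Ω) (g := fun _ => ∑ x ∈ s, #(E x))
    (by rw [← sum_mul, hdouble, sum_const, card_univ, smul_eq_mul, mul_comm])
  exact ⟨ω, hω⟩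

def uncoveredPairs {N k v : ℕ} (t : ℕ) (A : Fin N → Fin k → Fin v) :
    Finset ((Fin t → Fin k) × (Fin t → Fin v)) :=
  {p | Function.Injective p.1 ∧ ¬ ∃ r, ∀ i, A r (p.1 i) = p.2 i}

theorem exists_isCoveringArray_of_card_uncoveredPairs_add_le {N k k' v t : ℕ} (ht : 0 < t)
    (A : Fin N → Fin k' → Fin v) (h : #(uncoveredPairs t A) + k ≤ k') :
    ∃ A' : Fin N → Fin k → Fin v, IsCoveringArray t A' := by
  set S : Finset (Fin k') := univ \ (uncoveredPairs t A).image fun p => p.1 ⟨0, ht⟩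
  have hS : k ≤ #S := by
    have := card_image_le (s := uncoveredPairs t A) (f := fun p => p.1 ⟨0, ht⟩)
    rw [card_sdiff_of_subset (subset_univ _), card_univ, Fintype.card_fin]
    omega
  obtain ⟨emb⟩ : Nonempty (Fin k ↪ S) :=
    Function.Embedding.nonempty_of_card_le (by simpa using hS)
  refine ⟨fun r j => A r (emb j), fun cols hcols x => ?_⟩
  by_contra hnot
  have hmem : ((fun i => (emb (cols i) : Fin k')), x) ∈ uncoveredPairs t A := by
    simp only [uncoveredPairs, mem_filter, mem_univ, true_and]
    exact ⟨fun i j hij => hcols (emb.injective (Subtype.ext hij)), hnot⟩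
  exact (mem_sdiff.1 (emb (cols ⟨0, ht⟩)).2).2 (mem_image.2 ⟨_, hmem, rfl⟩)

def shiftArray {M k v : ℕ} [NeZero v] (B : Fin M → Fin k → Fin v) :
    Fin (v * M) → Fin k → Fin v :=
  fun ρ j => B (finProdFinEquiv.symm ρ).2 j + (finProdFinEquiv.symm ρ).1

theorem exists_shiftArray_eq_iff {M k v t : ℕ} [NeZero v] (B : Fin M → Fin k → Fin v)
    (c : Fin t → Fin k) (x : Fin t → Fin v) :
    (∃ ρ, ∀ i, shiftArray B ρ (c i) = x i) ↔ ∃ r, ∃ a, ∀ i, B r (c i) + a = x i := by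
  rw [finProdFinEquiv.symm.exists_congr_left]
  simp only [shiftArray, Equiv.symm_symm, Equiv.symm_apply_apply, Prod.exists]
  exact exists_comm

theorem exists_card_uncoveredPairs_shiftArray_le {t k v M : ℕ} [NeZero v] (ht : 0 < t) :
    ∃ B : Fin M → Fin k → Fin v, (#(uncoveredPairs t (shiftArray B)) : ℝ) ≤
      ((k : ℝ) * v) ^ t * (1 - 1 / (v : ℝ) ^ (t - 1)) ^ M := by
  have : Nonempty (Fin t) := ⟨⟨0, ht⟩⟩
  let X : Finset ((Fin t → Fin k) × (Fin t → Fin v)) := {p | Function.Injective p.1}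
  let E (p : (Fin t → Fin k) × (Fin t → Fin v)) : Finset (Fin M → Fin k → Fin v) :=
    Fintype.piFinset fun _ => {w | ¬ ∃ a, ∀ i, w (p.1 i) + a = p.2 i}
  obtain ⟨B, hB⟩ := exists_card_filter_mem_mul_le_sum X E
  have huncovered : uncoveredPairs t (shiftArray B) = {p ∈ X | B ∈ E p} := by
    ext p
    simp [uncoveredPairs, exists_shiftArray_eq_iff, X, E]
  have hE : ∀ p ∈ X, (#(E p) : ℝ) =
      (1 - 1 / (v : ℝ) ^ (t - 1)) ^ M * Fintype.card (Fin M → Fin k → Fin v) := by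
    intro p hp
    simp only [X, mem_filter] at hp
    have hrow : (#{w : Fin k → Fin v | ¬ ∃ a, ∀ i, w (p.1 i) + a = p.2 i} : ℝ) =
        (1 - 1 / (v : ℝ) ^ (t - 1)) * v ^ k := by
      -- `convert` reconciles the decidability instances `Fin` uses for `∃` and `∀`
      convert card_filter_not_exists_add_eq hp.2 p.2 using 2 <;> simp
    rw [Fintype.card_piFinset_const, Nat.cast_pow, hrow, mul_pow]
    simp only [Fintype.card_fin, Fintype.card_fun]
    push_cast
    ring
  have hX : (#X : ℝ) ≤ ((k : ℝ) * v) ^ t := calc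
    (#X : ℝ) ≤ Fintype.card ((Fin t → Fin k) × (Fin t → Fin v)) := by
      exact_mod_cast card_le_univ X
    _ = ((k : ℝ) * v) ^ t := by simp [mul_pow]
  have hΩ : (0 : ℝ) < Fintype.card (Fin M → Fin k → Fin v) := by
    exact_mod_cast Fintype.card_pos
  have hq : (0 : ℝ) ≤ 1 - 1 / (v : ℝ) ^ (t - 1) := sub_nonneg.2 <|
    div_le_one_of_le₀ (one_le_pow₀ (by exact_mod_cast NeZero.one_le (n := v))) (by positivity)
  have hB' : (#{p ∈ X | B ∈ E p} : ℝ) * Fintype.card (Fin M → Fin k → Fin v) ≤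
      ∑ p ∈ X, (#(E p) : ℝ) := by exact_mod_cast hB
  rw [sum_congr rfl hE, sum_const, nsmul_eq_mul] at hB'
  refine ⟨B, ?_⟩
  rw [huncovered]
  nlinarith [mul_le_mul_of_nonneg_right hX (pow_nonneg hq M)]

theorem CAN_le_of_mul_pow_le {t k v M : ℕ} (ht : 0 < t) (hv : 0 < v)
    (h : ((2 * k : ℝ) * v) ^ t * (1 - 1 / (v : ℝ) ^ (t - 1)) ^ M ≤ k) :
    CAN t k v ≤ v * M := by
  have : NeZero v := ⟨hv.ne'⟩
  obtain ⟨B, hB⟩ := exists_card_uncoveredPairs_shiftArray_le (k := 2 * k) (v := v) (M := M) ht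
  have hsmall : #(uncoveredPairs t (shiftArray B)) ≤ k := by
    push_cast at hB
    exact_mod_cast hB.trans h
  obtain ⟨A, hA⟩ := exists_isCoveringArray_of_card_uncoveredPairs_add_le ht (shiftArray B)
    (k := k) (by omega)
  exact Nat.sInf_le ⟨A, hA⟩

open Topology

theorem limsup_le_of_eventually_le_of_tendsto {α : Type*} {l : Filter α} [l.NeBot]
    {f g : α → ℝ} {L : ℝ} (hf : ∀ᶠ x in l, 0 ≤ f x) (hfg : f ≤ᶠ[l] g)
    (hg : Tendsto g l (𝓝 L)) :
    limsup f l ≤ L := by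
  rw [← hg.limsup_eq]
  exact limsup_le_limsup hfg (isCoboundedUnder_le_of_eventually_le l hf) hg.isBoundedUnder_le

theorem CAN_le_mul_logb_add_one {t v k : ℕ} (ht : 2 ≤ t) (hv : 2 ≤ v) (hk : 1 ≤ k) :
    (CAN t k v : ℝ) ≤ v * (Real.logb ((v : ℝ) ^ (t - 1) / ((v : ℝ) ^ (t - 1) - 1))
      ((2 * v : ℝ) ^ t * k ^ (t - 1)) + 1) := by
  have hV : 1 < (v : ℝ) ^ (t - 1) := one_lt_pow₀ (by exact_mod_cast hv) (by omega)
  set b := (v : ℝ) ^ (t - 1) / ((v : ℝ) ^ (t - 1) - 1)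
  have hb : 1 < b := (one_lt_div (by linarith)).2 (by linarith)
  set X : ℝ := (2 * v : ℝ) ^ t * k ^ (t - 1)
  have hX : 1 ≤ X := one_le_mul_of_one_le_of_one_le
    (one_le_pow₀ (by norm_cast; omega)) (one_le_pow₀ (by exact_mod_cast hk))
  set M := ⌈Real.logb b X⌉₊
  have hXM : X ≤ b ^ M := calc
    X = b ^ Real.logb b X := (Real.rpow_logb (by linarith) hb.ne' (by linarith)).symm
    _ ≤ b ^ (M : ℝ) := Real.rpow_le_rpow_of_exponent_le hb.le (Nat.le_ceil _)
    _ = b ^ M := Real.rpow_natCast b M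
  have hq : 1 - 1 / (v : ℝ) ^ (t - 1) = b⁻¹ := by
    have : (v : ℝ) ^ (t - 1) - 1 ≠ 0 := by linarith
    simp only [b, inv_div]
    field_simp
  have hCAN : CAN t k v ≤ v * M := by
    refine CAN_le_of_mul_pow_le (by omega) (by omega) ?_
    obtain ⟨s, rfl⟩ : ∃ s, t = s + 1 := ⟨t - 1, by omega⟩
    rw [hq, inv_pow, ← div_eq_mul_inv, div_le_iff₀ (by positivity)]
    calc ((2 * k : ℝ) * v) ^ (s + 1) = X * k := by simp only [X, Nat.add_sub_cancel]; ring
      _ ≤ b ^ M * k := by gcongr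
      _ = k * b ^ M := mul_comm _ _
  calc (CAN t k v : ℝ) ≤ v * M := by exact_mod_cast hCAN
    _ ≤ v * (Real.logb b X + 1) := by
      gcongr
      exact (Nat.ceil_lt_add_one (Real.logb_nonneg hb hX)).le

theorem CAN_div_logb_le {t v k : ℕ} (ht : 2 ≤ t) (hv : 2 ≤ v) (hk : 2 ≤ k) :
    (CAN t k v : ℝ) / Real.logb 2 k ≤
      v * (t - 1) / Real.logb 2 ((v : ℝ) ^ (t - 1) / ((v : ℝ) ^ (t - 1) - 1)) +
        v * (t * Real.logb ((v : ℝ) ^ (t - 1) / ((v : ℝ) ^ (t - 1) - 1)) (2 * v) + 1) /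
          Real.logb 2 k := by
  have hV : 1 < (v : ℝ) ^ (t - 1) := one_lt_pow₀ (by exact_mod_cast hv) (by omega)
  set b := (v : ℝ) ^ (t - 1) / ((v : ℝ) ^ (t - 1) - 1)
  have hb : 1 < b := (one_lt_div (by linarith)).2 (by linarith)
  have hlogb : 0 < Real.logb 2 b := Real.logb_pos one_lt_two hb
  have hlogk : 0 < Real.logb 2 k := Real.logb_pos one_lt_two (by exact_mod_cast hk)
  have hchange : Real.logb b k = Real.logb 2 k / Real.logb 2 b := by
    rw [eq_div_iff hlogb.ne', mul_comm, Real.mul_logb (by positivity) hb.ne' (by linarith)]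
  have hsplit : Real.logb b ((2 * v : ℝ) ^ t * k ^ (t - 1)) =
      t * Real.logb b (2 * v) + (t - 1) * (Real.logb 2 k / Real.logb 2 b) := by
    rw [Real.logb_mul (by positivity) (by positivity), Real.logb_pow, Real.logb_pow, hchange,
      Nat.cast_sub (by omega), Nat.cast_one]
  rw [div_le_iff₀ hlogk]
  calc (CAN t k v : ℝ) ≤ _ := CAN_le_mul_logb_add_one ht hv (by omega)
    _ = _ := by
      rw [hsplit]
      field_simp
      ring

theorem d_upper_bound_general (t v : ℕ) (ht : 2 ≤ t) (hv : 2 ≤ v) :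
    Filter.limsup (fun k : ℕ => (CAN t k v : ℝ) / Real.logb 2 k) Filter.atTop ≤
      (v : ℝ) * ((t : ℝ) - 1) /
        Real.logb 2 ((v : ℝ) ^ (t - 1) / ((v : ℝ) ^ (t - 1) - 1)) := by
  refine limsup_le_of_eventually_le_of_tendsto ?_
    ((eventually_ge_atTop 2).mono fun k hk => CAN_div_logb_le ht hv hk) ?_
  · filter_upwards [eventually_ge_atTop 1] with k hk
    have : 0 ≤ Real.logb 2 k := Real.logb_nonneg one_lt_two (by exact_mod_cast hk)
    positivity
  · simpa using tendsto_const_nhds.add (tendsto_const_nhds.div_atTop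
      ((Real.tendsto_logb_atTop one_lt_two).comp tendsto_natCast_atTop_atTop))
end

section
/- For every integer t ≥ 2 and v ≥ 2, the bound v(t−1)/log₂(v^(t−1)/(v^(t−1)−1)) is strictly smaller than the bound (t−1)/log₂(v^t/(v^t−1)); that is, v / log₂(v^(t−1)/(v^(t−1)−1)) < 1 / log₂(v^t/(v^t−1)). -/
theorem new_bound_beats_old (t v : ℕ) (ht : 2 ≤ t) (hv : 2 ≤ v) :
    (v : ℝ) / Real.logb 2 ((v : ℝ) ^ (t - 1) / ((v : ℝ) ^ (t - 1) - 1)) <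
      1 / Real.logb 2 ((v : ℝ) ^ t / ((v : ℝ) ^ t - 1)) := by
  have hv1 : (1 : ℝ) < (v : ℝ) := by exact_mod_cast hv
  set a : ℝ := (v : ℝ) ^ (t - 1) with hadef
  set b : ℝ := (v : ℝ) ^ t with hbdef
  have ht1 : 1 ≤ t - 1 := by omega
  have ha : 1 < a := one_lt_pow₀ hv1 (by omega)
  have hb : 1 < b := one_lt_pow₀ hv1 (by omega)
  have hab : b = a * v := by
    rw [hadef, hbdef, ← pow_succ]
    congr 1
    omega
  have ha0 : 0 < a - 1 := by linarith
  have hb0 : 0 < b - 1 := by linarith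
  have hA : 1 < a / (a - 1) := (one_lt_div ha0).2 (by linarith)
  have hB : 1 < b / (b - 1) := (one_lt_div hb0).2 (by linarith)
  have hL1 : 0 < Real.logb 2 (a / (a - 1)) := Real.logb_pos one_lt_two hA
  have hL2 : 0 < Real.logb 2 (b / (b - 1)) := Real.logb_pos one_lt_two hB
  -- key: (b/(b-1))^v < a/(a-1)
  have key : (b / (b - 1)) ^ v < a / (a - 1) := by
    have hbpos : (0 : ℝ) < b := by linarith
    have hs : -1 ≤ -(1 / b) := by
      rw [neg_le_neg_iff]
      exact (div_le_one hbpos).2 (by linarith)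
    have hs' : -(1 / b) ≠ 0 := by
      simp only [ne_eq, neg_eq_zero, div_eq_zero_iff]
      push_neg
      constructor <;> [norm_num; linarith]
    have hp : (1 : ℝ) < (v : ℝ) := hv1
    have bern := one_add_mul_self_lt_rpow_one_add hs hs' hp
    rw [Real.rpow_natCast] at bern
    have h1 : (1 : ℝ) + -(1 / b) = (b - 1) / b := by field_simp; ring
    have h2 : (1 : ℝ) + (v : ℝ) * -(1 / b) = (a - 1) / a := by
      have : (v : ℝ) / b = 1 / a := by
        rw [hab]; field_simp
      field_simp at this ⊢
      nlinarith [this]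
    rw [h1, h2] at bern
    -- bern : (a-1)/a < ((b-1)/b)^v
    have hx : (0 : ℝ) < ((b - 1) / b) ^ v := by positivity
    have hy : (0 : ℝ) < (a - 1) / a := by positivity
    have := one_div_lt_one_div_of_lt hy bern
    rwa [one_div, ← inv_pow, inv_div, one_div_div] at this
  have hv2 : ((v : ℝ)) * Real.logb 2 (b / (b - 1)) < 1 * Real.logb 2 (a / (a - 1)) := by
    rw [one_mul, ← Real.logb_pow]
    exact Real.logb_lt_logb one_lt_two (by positivity) key
  calc (v : ℝ) / Real.logb 2 (a / (a - 1))
      < 1 / Real.logb 2 (b / (b - 1)) := by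
        rw [div_lt_div_iff₀ hL1 hL2]
        linarith
end

section
/- d(2,2) = 1: the minimum size CAN(2,k,2) of a binary covering array of strength 2 satisfies limsup_{k→∞} CAN(2,k,2)/log₂ k = 1. -/
open Filter

/-!
Two equal columns miss the pair `(0, 1)`, so the `k` columns of a binary strength-2 covering
array with `N` rows are distinct words of length `N`, giving `log₂ k ≤ CAN(2,k,2)`.
Conversely (Kleitman–Spencer), the indicator vectors of a family of subsets of the rows which is
an antichain, intersecting and co-intersecting form such an array; the `(n+1)`-subsets of
`2n+2` rows containing a fixed row are such a family, of size `C(2n+1, n) ≥ 4ⁿ/(2n+1)`. Hence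
`CAN(2,k,2) ≤ log₂ k + log₂ log₂ k + O(1)`.
-/

open Finset Real Topology

theorem IsCoveringArray.injective_columns {N k v : ℕ} {A : Fin N → Fin k → Fin v}
    (hA : IsCoveringArray 2 A) (hv : 1 < v) :
    Function.Injective fun c r => A r c := by
  intro c c' h
  by_contra hne
  have hcols : Function.Injective ![c, c'] := by
    intro i j
    fin_cases i <;> fin_cases j <;> simp [hne, Ne.symm hne]
  obtain ⟨r, hr⟩ := hA ![c, c'] hcols ![⟨0, by omega⟩, ⟨1, hv⟩]
  have h0 := hr 0
  have h1 := hr 1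
  simp only [Matrix.cons_val_zero, Matrix.cons_val_one] at h0 h1
  rw [show A r c = A r c' from congrFun h r, h1] at h0
  exact absurd (congrArg Fin.val h0) one_ne_zero

theorem IsCoveringArray.card_le_pow {N k v : ℕ} {A : Fin N → Fin k → Fin v}
    (hA : IsCoveringArray 2 A) (hv : 1 < v) : k ≤ v ^ N := by
  simpa using Fintype.card_le_of_injective _ (hA.injective_columns hv)

theorem isCoveringArray_two_indicator {N k : ℕ} (S : Fin k → Finset (Fin N))
    (hanti : ∀ i j, i ≠ j → ¬ S i ⊆ S j)
    (hinter : ∀ i j, i ≠ j → (S i ∩ S j).Nonempty)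
    (hunion : ∀ i j, i ≠ j → S i ∪ S j ≠ univ) :
    IsCoveringArray 2 fun r c => if r ∈ S c then (1 : Fin 2) else 0 := by
  intro cols hinj tup
  have hne : cols 0 ≠ cols 1 := fun h => zero_ne_one (hinj h)
  suffices ∀ a b : Fin 2, ∃ r, (if r ∈ S (cols 0) then (1 : Fin 2) else 0) = a ∧
      (if r ∈ S (cols 1) then (1 : Fin 2) else 0) = b by
    obtain ⟨r, h0, h1⟩ := this (tup 0) (tup 1)
    exact ⟨r, Fin.forall_fin_two.2 ⟨h0, h1⟩⟩
  intro a b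
  fin_cases a <;> fin_cases b
  · obtain ⟨r, hr⟩ := not_forall.1 (mt eq_univ_of_forall (hunion _ _ hne))
    rw [mem_union, not_or] at hr
    exact ⟨r, by simp [hr]⟩
  · obtain ⟨r, hr1, hr0⟩ := not_subset.1 (hanti _ _ hne.symm)
    exact ⟨r, by simp [hr0, hr1]⟩
  · obtain ⟨r, hr0, hr1⟩ := not_subset.1 (hanti _ _ hne)
    exact ⟨r, by simp [hr0, hr1]⟩
  · obtain ⟨r, hr⟩ := hinter _ _ hne
    rw [mem_inter] at hr
    exact ⟨r, by simp [hr]⟩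

theorem exists_isCoveringArray_two_of_le_choose {N j k : ℕ} (hj : 2 * j + 1 ≤ N)
    (hk : k ≤ N.choose j) : ∃ A : Fin (N + 1) → Fin k → Fin 2, IsCoveringArray 2 A := by
  obtain ⟨f⟩ : Nonempty (Fin k ↪ powersetCard j (univ : Finset (Fin N))) :=
    Function.Embedding.nonempty_of_card_le (by simpa using hk)
  have hcard (c : Fin k) : #(f c : Finset (Fin N)) = j := (mem_powersetCard.1 (f c).2).2
  set S : Fin k → Finset (Fin (N + 1)) :=
    fun c => insert 0 ((f c : Finset (Fin N)).map (Fin.succEmb N))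
  have hzero (c : Fin k) : 0 ∉ (f c : Finset (Fin N)).map (Fin.succEmb N) := by simp
  have hinter (c c' : Fin k) : (S c ∩ S c').Nonempty := ⟨0, by simp [S]⟩
  refine ⟨_, isCoveringArray_two_indicator S (fun c c' hne hsub => hne ?_)
    (fun c c' _ => hinter c c') (fun c c' _ hunion => ?_)⟩
  · rw [insert_subset_insert_iff (hzero c), map_subset_map] at hsub
    exact f.injective (Subtype.ext (eq_of_subset_of_card_le hsub (by rw [hcard, hcard])))
  · have hS (c : Fin k) : #(S c) = j + 1 := by
      rw [card_insert_of_notMem (hzero c), card_map, hcard]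
    have hsum := card_union_add_card_inter (S c) (S c')
    rw [hunion, card_univ, Fintype.card_fin, hS, hS] at hsum
    have := (hinter c c').card_pos
    omega

theorem CAN_le {t N k v : ℕ} {A : Fin N → Fin k → Fin v} (hA : IsCoveringArray t A) :
    CAN t k v ≤ N :=
  Nat.sInf_le ⟨A, hA⟩

theorem four_pow_le_mul_choose (n : ℕ) : 4 ^ n ≤ (2 * n + 1) * (2 * n + 1).choose n :=
  (Nat.four_pow_le_two_mul_add_one_mul_central_binom n).trans
    (Nat.mul_le_mul_left _ (Nat.choose_le_choose n (Nat.le_succ _)))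

theorem two_pow_lt_two_mul_choose (n : ℕ) : 2 ^ n < 2 * (2 * n + 1).choose n := by
  have hn : 2 * n + 1 < 2 ^ (n + 1) := by
    have := @Nat.lt_two_pow_self n
    rw [pow_succ]
    omega
  refine Nat.lt_of_mul_lt_mul_left (a := 2 ^ n) ?_
  calc 2 ^ n * 2 ^ n = 4 ^ n := by rw [← mul_pow]; norm_num
    _ ≤ (2 * n + 1) * (2 * n + 1).choose n := four_pow_le_mul_choose n
    _ < 2 ^ (n + 1) * (2 * n + 1).choose n :=
        Nat.mul_lt_mul_of_pos_right hn (Nat.choose_pos (by omega))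
    _ = 2 ^ n * (2 * (2 * n + 1).choose n) := by ring

theorem lt_choose_two_mul_succ_add_one (k : ℕ) : k < (2 * (k + 1) + 1).choose (k + 1) := by
  have := two_pow_lt_two_mul_choose (k + 1)
  have := @Nat.lt_two_pow_self k
  rw [pow_succ] at *
  omega

theorem exists_choose_lt_le {k : ℕ} (hk : 2 ≤ k) :
    ∃ m, (2 * m + 1).choose m < k ∧ k ≤ (2 * (m + 1) + 1).choose (m + 1) := by
  have hex : ∃ n, k ≤ (2 * n + 1).choose n := ⟨k + 1, (lt_choose_two_mul_succ_add_one k).le⟩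
  have hpos : Nat.find hex ≠ 0 := fun h => by
    have := Nat.find_spec hex
    rw [h] at this
    simp at this
    omega
  obtain ⟨m, hm⟩ := Nat.exists_eq_succ_of_ne_zero hpos
  exact ⟨m, not_le.1 (Nat.find_min hex (by omega)), by simpa [hm] using Nat.find_spec hex⟩

theorem CAN_two_two_le_of_le_choose {n k : ℕ} (hk : k ≤ (2 * n + 1).choose n) :
    CAN 2 k 2 ≤ 2 * n + 2 :=
  have ⟨_, hA⟩ := exists_isCoveringArray_two_of_le_choose le_rfl hk
  CAN_le hA

theorem le_two_pow_CAN_two_two (k : ℕ) : k ≤ 2 ^ CAN 2 k 2 := by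
  have hne : {N | ∃ A : Fin N → Fin k → Fin 2, IsCoveringArray 2 A}.Nonempty :=
    ⟨_, exists_isCoveringArray_two_of_le_choose le_rfl (lt_choose_two_mul_succ_add_one k).le⟩
  obtain ⟨A, hA⟩ := Nat.sInf_mem hne
  exact hA.card_le_pow one_lt_two

theorem logb_le_CAN_two_two (k : ℕ) : logb 2 k ≤ CAN 2 k 2 := by
  rcases k.eq_zero_or_pos with rfl | hk
  · simp
  rw [logb_le_iff_le_rpow one_lt_two (by exact_mod_cast hk), rpow_natCast]
  exact_mod_cast le_two_pow_CAN_two_two k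

theorem CAN_two_two_le {k : ℕ} (hk : 2 ≤ k) :
    (CAN 2 k 2 : ℝ) ≤ logb 2 k + logb 2 (logb 2 k) + 7 := by
  obtain ⟨m, hlt, hle⟩ := exists_choose_lt_le hk
  have hk0 : (0 : ℝ) < k := by positivity
  have hL : 1 ≤ logb 2 k := by
    rw [le_logb_iff_rpow_le one_lt_two hk0, rpow_one]
    exact_mod_cast hk
  have hCAN : (CAN 2 k 2 : ℝ) ≤ 2 * m + 4 := by
    exact_mod_cast (CAN_two_two_le_of_le_choose hle).trans (by omega)
  have hm : (m : ℝ) < logb 2 k + 1 := by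
    have : (2 : ℝ) ^ (m : ℝ) < 2 * k := by
      rw [rpow_natCast]
      exact_mod_cast (two_pow_lt_two_mul_choose m).trans (by omega)
    rwa [← lt_logb_iff_rpow_lt one_lt_two (by positivity), logb_mul two_ne_zero hk0.ne',
      logb_self_eq_one one_lt_two, add_comm] at this
  have hpow : (2 : ℝ) ^ ((2 * m : ℕ) : ℝ) < 8 * logb 2 k * k := by
    have : 4 ^ m < (2 * m + 1) * k :=
      (four_pow_le_mul_choose m).trans_lt (Nat.mul_lt_mul_of_pos_left hlt (by omega))
    rw [rpow_natCast, pow_mul]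
    calc ((2 : ℝ) ^ 2) ^ m = ((4 ^ m : ℕ) : ℝ) := by norm_num
      _ < (2 * m + 1) * k := by exact_mod_cast this
      _ ≤ 8 * logb 2 k * k := by gcongr; linarith
  rw [← lt_logb_iff_rpow_lt one_lt_two (by positivity), logb_mul (by positivity) hk0.ne',
    logb_mul (by norm_num) (by positivity), show (8 : ℝ) = 2 ^ (3 : ℝ) by norm_num,
    logb_rpow two_pos (by norm_num)] at hpow
  push_cast at hpow
  linarith

theorem tendsto_add_logb_add_div_self (b c : ℝ) :
    Tendsto (fun x => (x + logb b x + c) / x) atTop (𝓝 1) := by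
  have hlog : Tendsto (fun x => logb b x / x) atTop (𝓝 0) :=
    isLittleO_logb_id_atTop.tendsto_div_nhds_zero
  have hconst : Tendsto (fun x => c / x) atTop (𝓝 0) :=
    tendsto_const_nhds.div_atTop tendsto_id
  have := (tendsto_const_nhds (x := (1 : ℝ))).add (hlog.add hconst)
  rw [add_zero, add_zero] at this
  refine this.congr' ?_
  filter_upwards [eventually_ne_atTop 0] with x hx
  field_simp
  ring

theorem d_two_two_eq_one :
    Filter.limsup (fun k : ℕ => (CAN 2 k 2 : ℝ) / Real.logb 2 k) Filter.atTop = 1 := by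
  have hlog : Tendsto (fun k : ℕ => logb 2 k) atTop atTop :=
    (tendsto_logb_atTop one_lt_two).comp tendsto_natCast_atTop_atTop
  refine Tendsto.limsup_eq (tendsto_of_tendsto_of_tendsto_of_le_of_le' tendsto_const_nhds
    ((tendsto_add_logb_add_div_self 2 7).comp hlog) ?_ ?_)
  all_goals filter_upwards [eventually_ge_atTop 2] with k hk
  · have hL : 0 < logb 2 k := logb_pos one_lt_two (by exact_mod_cast hk)
    exact (one_le_div hL).2 (logb_le_CAN_two_two k)
  · exact div_le_div_of_nonneg_right (CAN_two_two_le hk)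
      (logb_nonneg one_lt_two (by exact_mod_cast (by omega : 1 ≤ k)))
end

section
/- Let v ≥ 3 be an integer. Then d(2,v) ≤ v / log₂( v^v (v−2)^(v−2) / (v−1)^(2(v−1)) ). -/
/-!
Take `2k` independent uniformly random *balanced* columns of length `vm`, each letter occurring
exactly `m` times. For two such columns and letters `a, b`, the `b`-positions of the second avoid
the `a`-positions of the first with probability `C(vm - m, m) / C(vm, m)`, which the entropy
bounds for binomial coefficients put below `(vm + 1) ρ⁻ᵐ`, where
`ρ = vᵛ (v-2)ᵛ⁻² / (v-1)²⁽ᵛ⁻¹⁾`. Once `ρᵐ ≳ k · poly(v, m)`, i.e. `m ≈ log₂ k / log₂ ρ`, the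
expected number of pairs of columns missing some pair of letters is at most `k`; deleting one
column from each such pair leaves a covering array with `k` columns and `vm` rows.
-/

open Filter

open Finset Real
open scoped Pointwise

section Columns

variable {ι β : Type*}

def CoversAllPairs (x y : ι → β) : Prop :=
  ∀ a b, ∃ r, x r = a ∧ y r = b

instance [Fintype ι] [Fintype β] [DecidableEq β] (x y : ι → β) :
    Decidable (CoversAllPairs x y) :=
  inferInstanceAs (Decidable (∀ a b, ∃ r, x r = a ∧ y r = b))

theorem isCoveringArray_two_of_coversAllPairs {N k v : ℕ} {A : Fin N → Fin k → Fin v}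
    (h : ∀ i j, i ≠ j → CoversAllPairs (fun r => A r i) (fun r => A r j)) :
    IsCoveringArray 2 A := by
  intro cols hcols tup
  obtain ⟨r, h0, h1⟩ := h (cols 0) (cols 1) (hcols.ne (by decide)) (tup 0) (tup 1)
  exact ⟨r, fun i => by fin_cases i; exacts [h0, h1]⟩

theorem card_filter_piFinset_apply_pair_le {α : Type*} {K : ℕ} (s : Finset α) {i j : Fin K}
    (hij : i ≠ j) (P : α → α → Prop) [∀ x y, Decidable (P x y)] :
    #{w ∈ Fintype.piFinset fun _ => s | P (w i) (w j)}
      ≤ #{p ∈ s ×ˢ s | P p.1 p.2} * #s ^ (K - 2) := by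
  let Rest := {t : Fin K // t ≠ i ∧ t ≠ j}
  have hRest : Fintype.card Rest = K - 2 := by
    rw [Fintype.card_subtype, show ({t | t ≠ i ∧ t ≠ j} : Finset (Fin K)) = univ \ {i, j} by
      ext; simp [not_or], card_sdiff_of_subset (subset_univ _), card_univ, Fintype.card_fin,
      card_pair hij]
  calc #{w ∈ Fintype.piFinset fun _ => s | P (w i) (w j)}
      ≤ #({p ∈ s ×ˢ s | P p.1 p.2} ×ˢ Fintype.piFinset fun _ : Rest => s) := by
        refine card_le_card_of_injOn (fun w => ((w i, w j), fun t => w t.1)) ?_ ?_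
        · intro w hw
          simp only [coe_filter, Fintype.mem_piFinset, Set.mem_ofPred_eq] at hw
          simp [hw.1 _, hw.2]
        · intro w₁ _ w₂ _ h
          simp only [Prod.mk.injEq, funext_iff] at h
          funext t
          by_cases hti : t = i
          · exact hti ▸ h.1.1
          by_cases htj : t = j
          · exact htj ▸ h.1.2
          exact h.2 ⟨t, hti, htj⟩
    _ = #{p ∈ s ×ˢ s | P p.1 p.2} * #s ^ (K - 2) := by
        rw [card_product, Fintype.card_piFinset, prod_const, card_univ, hRest]

variable [Fintype ι] [Fintype β] [DecidableEq β]

def badPairs {K : ℕ} (w : Fin K → ι → β) : Finset (Fin K × Fin K) :=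
  {p | p.1 ≠ p.2 ∧ ¬CoversAllPairs (w p.1) (w p.2)}

/-- Deleting one column of every bad pair leaves a covering array. -/
theorem CAN_two_le_of_card_badPairs_add_le {N K k v : ℕ} (w : Fin K → Fin N → Fin v)
    (h : #(badPairs w) + k ≤ K) : CAN 2 k v ≤ N := by
  set good := univ \ (badPairs w).image Prod.fst
  have hgood : Fintype.card (Fin k) ≤ #good := by
    have := card_image_le (s := badPairs w) (f := Prod.fst)
    rw [card_sdiff_of_subset (subset_univ _), card_univ, Fintype.card_fin, Fintype.card_fin]
    omega
  obtain ⟨σ, hσ⟩ := Function.Embedding.exists_of_card_le_finset hgood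
  refine Nat.sInf_le ⟨fun r c => w (σ c) r,
    isCoveringArray_two_of_coversAllPairs fun i j hij => ?_⟩
  by_contra hfail
  have hbad : (σ i, σ j) ∈ badPairs w := by
    simp [badPairs, σ.injective.ne hij, hfail]
  exact (mem_sdiff.1 (hσ ⟨i, rfl⟩)).2 (mem_image_of_mem Prod.fst hbad)

/-- First moment method: some `K`-tuple of columns drawn from `s` has at most the average
number of bad pairs. -/
theorem exists_card_badPairs_mul_le {s : Finset (ι → β)} (hs : s.Nonempty) {D E : ℕ}
    (hfail : #{p ∈ s ×ˢ s | ¬CoversAllPairs p.1 p.2} * D ≤ #s ^ 2 * E) (K : ℕ) :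
    ∃ w : Fin K → ι → β, #(badPairs w) * D ≤ K ^ 2 * E := by
  set W := Fintype.piFinset fun _ : Fin K => s
  have hpair : ∀ p : Fin K × Fin K,
      #{w ∈ W | p.1 ≠ p.2 ∧ ¬CoversAllPairs (w p.1) (w p.2)} * D ≤ #s ^ K * E := by
    rintro ⟨i, j⟩
    by_cases hij : i = j
    · simp [hij]
    have hK : 2 ≤ K := by have := i.2; have := j.2; have := Fin.val_ne_of_ne hij; omega
    calc #{w ∈ W | (i, j).1 ≠ (i, j).2 ∧ ¬CoversAllPairs (w (i, j).1) (w (i, j).2)} * D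
        = #{w ∈ W | ¬CoversAllPairs (w i) (w j)} * D := by simp [hij]
      _ ≤ #{p ∈ s ×ˢ s | ¬CoversAllPairs p.1 p.2} * #s ^ (K - 2) * D :=
          Nat.mul_le_mul_right _
            (card_filter_piFinset_apply_pair_le s hij fun x y => ¬CoversAllPairs x y)
      _ ≤ #s ^ 2 * E * #s ^ (K - 2) := by
          rw [mul_right_comm]; exact Nat.mul_le_mul_right _ hfail
      _ = #s ^ K * E := by rw [mul_right_comm, ← pow_add, Nat.add_sub_cancel' hK]
  have hsum : ∑ w ∈ W, #(badPairs w) * D ≤ ∑ _w ∈ W, K ^ 2 * E :=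
    calc ∑ w ∈ W, #(badPairs w) * D
        = ∑ p : Fin K × Fin K,
            #{w ∈ W | p.1 ≠ p.2 ∧ ¬CoversAllPairs (w p.1) (w p.2)} * D := by
          simp only [← sum_mul, badPairs, card_filter]
          rw [sum_comm]
      _ ≤ ∑ _p : Fin K × Fin K, #s ^ K * E := sum_le_sum fun p _ => hpair p
      _ = ∑ _w ∈ W, K ^ 2 * E := by
          simp only [sum_const, card_univ, Fintype.card_prod, Fintype.card_fin, W,
            Fintype.card_piFinset_const, smul_eq_mul]
          ring
  obtain ⟨w, -, hw⟩ := exists_le_of_sum_le hs.piFinset_const hsum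
  exact ⟨w, hw⟩

end Columns

section Balanced

variable (ι β : Type*) [Fintype ι] [DecidableEq ι] [Fintype β] [DecidableEq β]

def balanced (m : ℕ) : Finset (ι → β) :=
  {x | ∀ b, #{i | x i = b} = m}

variable {ι β} {m : ℕ}

theorem Finset.exists_perm_map_eq {α : Type*} [DecidableEq α] {S T : Finset α} (h : #S = #T) :
    ∃ σ : Equiv.Perm α, S.map σ.toEmbedding = T := by
  obtain ⟨σ, hσ⟩ :=
    (Set.powersetCard.isPretransitive (α := α) (n := #T)).exists_smul_eq ⟨S, h⟩ ⟨T, rfl⟩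
  exact ⟨σ, by simpa [map_eq_image, smul_finset_def] using congrArg Subtype.val hσ⟩

theorem card_filter_balanced_forall_ne_congr (a : β) {S T : Finset ι} (h : #S = #T) :
    #{x ∈ balanced ι β m | ∀ i ∈ S, x i ≠ a} = #{x ∈ balanced ι β m | ∀ i ∈ T, x i ≠ a} := by
  obtain ⟨σ, rfl⟩ := exists_perm_map_eq h
  refine card_equiv (σ.arrowCongr (Equiv.refl β)) fun x => ?_
  have hfiber : ∀ b, #{i | x (σ.symm i) = b} = #{i | x i = b} := fun b =>
    card_equiv σ.symm fun i => by simp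
  simp only [balanced, mem_filter, mem_univ, true_and, Equiv.arrowCongr_apply, Equiv.coe_refl,
    Function.comp_apply, id_eq, hfiber, mem_map_equiv]
  exact and_congr_right fun _ => σ.symm.forall_congr_right.symm

/-- Double count the pairs `(x, T)` of a balanced word and an `m`-set avoided by the letter `a`
in `x`; by symmetry every `m`-set is avoided by equally many balanced words. -/
theorem card_filter_balanced_forall_ne_mul_choose (a : β) {S : Finset ι} (hS : #S = m) :
    #{x ∈ balanced ι β m | ∀ i ∈ S, x i ≠ a} * (Fintype.card ι).choose m
      = #(balanced ι β m) * (Fintype.card ι - m).choose m := by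
  have := card_mul_eq_card_mul (fun x (T : Finset ι) => ∀ i ∈ T, x i ≠ a)
    (s := balanced ι β m) (t := powersetCard m univ)
    (m := (Fintype.card ι - m).choose m) (n := #{x ∈ balanced ι β m | ∀ i ∈ S, x i ≠ a})
    (fun x hx => ?_) (fun T hT => ?_)
  · rw [this, card_powersetCard, card_univ, mul_comm]
  · have hxa : #{i | x i = a} = m := by
      simp only [balanced, mem_filter, mem_univ, true_and] at hx
      exact hx a
    have hx : #{i | x i ≠ a} = Fintype.card ι - m := by
      have := card_filter_add_card_filter_not (s := univ) fun i => x i = a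
      rw [card_univ, hxa] at this
      simp only [ne_eq]
      omega
    rw [← hx, ← card_powersetCard]
    congr 1
    ext T
    simp [bipartiteAbove, mem_powersetCard, subset_iff, and_comm]
  · exact card_filter_balanced_forall_ne_congr a ((mem_powersetCard.1 hT).2.trans hS.symm)

theorem card_filter_balanced_not_coversAllPairs_mul_le {y : ι → β} (hy : y ∈ balanced ι β m) :
    #{x ∈ balanced ι β m | ¬CoversAllPairs x y} * (Fintype.card ι).choose m
      ≤ Fintype.card β ^ 2 * (#(balanced ι β m) * (Fintype.card ι - m).choose m) := by
  have hsub : {x ∈ balanced ι β m | ¬CoversAllPairs x y}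
      ⊆ univ.biUnion fun ab : β × β =>
          {x ∈ balanced ι β m | ∀ i ∈ ({i | y i = ab.2} : Finset ι), x i ≠ ab.1} := by
    intro x hx
    simp only [mem_filter, CoversAllPairs, not_forall, not_exists, not_and] at hx
    obtain ⟨hx, a, b, hab⟩ := hx
    simp only [mem_biUnion, mem_univ, mem_filter, true_and]
    exact ⟨(a, b), hx, fun i hi hxi => hab i hxi hi⟩
  calc #{x ∈ balanced ι β m | ¬CoversAllPairs x y} * (Fintype.card ι).choose m
      ≤ ∑ ab : β × β, #{x ∈ balanced ι β m | ∀ i ∈ ({i | y i = ab.2} : Finset ι), x i ≠ ab.1}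
          * (Fintype.card ι).choose m := by
        rw [← sum_mul]
        exact Nat.mul_le_mul_right _ ((card_le_card hsub).trans card_biUnion_le)
    _ = ∑ _ab : β × β, #(balanced ι β m) * (Fintype.card ι - m).choose m := by
        refine sum_congr rfl fun ab _ => card_filter_balanced_forall_ne_mul_choose ab.1 ?_
        simp only [balanced, mem_filter, mem_univ, true_and] at hy
        exact hy ab.2
    _ = _ := by rw [sum_const, card_univ, Fintype.card_prod, smul_eq_mul, sq]

theorem card_filter_balanced_product_not_coversAllPairs_mul_le :
    #{p ∈ balanced ι β m ×ˢ balanced ι β m | ¬CoversAllPairs p.1 p.2}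
        * (Fintype.card ι).choose m
      ≤ #(balanced ι β m) ^ 2 * (Fintype.card β ^ 2 * (Fintype.card ι - m).choose m) := by
  rw [card_filter, sum_product_right, sum_mul]
  calc ∑ y ∈ balanced ι β m, (∑ x ∈ balanced ι β m, if ¬CoversAllPairs x y then 1 else 0)
        * (Fintype.card ι).choose m
      ≤ ∑ _y ∈ balanced ι β m,
          Fintype.card β ^ 2 * (#(balanced ι β m) * (Fintype.card ι - m).choose m) := by
        refine sum_le_sum fun y hy => ?_
        rw [← card_filter]
        exact card_filter_balanced_not_coversAllPairs_mul_le hy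
    _ = _ := by rw [sum_const, smul_eq_mul]; ring

theorem balanced_nonempty (v m : ℕ) : (balanced (Fin (v * m)) (Fin v) m).Nonempty := by
  refine ⟨fun i => (finProdFinEquiv.symm i).1, ?_⟩
  simp only [balanced, mem_filter, mem_univ, true_and]
  intro b
  rw [card_equiv finProdFinEquiv.symm (t := {q | q.1 = b}) fun i => by simp,
    show ({q | q.1 = b} : Finset (Fin v × Fin m)) = {b} ×ˢ univ by ext ⟨c, j⟩; simp [eq_comm]]
  simp

end Balanced

namespace Nat

theorem choose_succ_mul_pow_mul {n i : ℕ} (x : ℕ) (hi : i < n) :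
    n.choose (i + 1) * x ^ (n - (i + 1)) * ((i + 1) * x) = n.choose i * x ^ (n - i) * (n - i) := by
  calc n.choose (i + 1) * x ^ (n - (i + 1)) * ((i + 1) * x)
      = n.choose (i + 1) * (i + 1) * x ^ (n - (i + 1) + 1) := by ring
    _ = n.choose i * x ^ (n - i) * (n - i) := by
      rw [choose_succ_right_eq, show n - (i + 1) + 1 = n - i by omega]; ring

theorem choose_mul_pow_sub_le_choose_mul_pow_sub {x m : ℕ} (hx : 0 < x) (i : ℕ) :
    ((x + 1) * m).choose i * x ^ ((x + 1) * m - i)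
      ≤ ((x + 1) * m).choose m * x ^ ((x + 1) * m - m) := by
  set n := (x + 1) * m with hn
  set t : ℕ → ℕ := fun i => n.choose i * x ^ (n - i)
  have hxpos : ∀ i, 0 < (i + 1) * x := fun i => Nat.mul_pos i.succ_pos hx
  have up : MonotoneOn t (Set.Iic m) := by
    refine monotoneOn_of_le_add_one Set.ordConnected_Iic fun i _ _ hi => ?_
    have hi : i + 1 ≤ m := hi
    refine Nat.le_of_mul_le_mul_right ?_ (hxpos i)
    have hin : (i + 1) * x + i < n := by nlinarith
    rw [choose_succ_mul_pow_mul x (by omega)]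
    exact Nat.mul_le_mul_left _ (Nat.le_sub_of_add_le hin.le)
  have down : AntitoneOn t (Set.Ici m) := by
    refine antitoneOn_of_add_one_le Set.ordConnected_Ici fun i _ hi _ => ?_
    have hi : m ≤ i := hi
    rcases lt_or_ge i n with hin | hin
    · refine Nat.le_of_mul_le_mul_right ?_ (hxpos i)
      rw [choose_succ_mul_pow_mul x hin]
      exact Nat.mul_le_mul_left _ (Nat.sub_le_iff_le_add.2 (by nlinarith))
    · simp [t, choose_eq_zero_of_lt (show n < i + 1 by omega)]
  rcases le_total i m with h | h
  · exact up h (Set.mem_Iic.2 le_rfl) h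
  · exact down (Set.mem_Ici.2 le_rfl) h h

theorem choose_mul_pow_le_pow (c m : ℕ) (hc : 1 ≤ c) :
    (c * m).choose m * (c - 1) ^ ((c - 1) * m) ≤ c ^ (c * m) := by
  have hsum := add_pow 1 (c - 1) (c * m)
  rw [Nat.add_sub_cancel' hc] at hsum
  rw [hsum, Nat.sub_one_mul]
  have hm : m ∈ range (c * m + 1) := mem_range.2 (Nat.lt_succ_of_le (Nat.le_mul_of_pos_left m hc))
  calc (c * m).choose m * (c - 1) ^ (c * m - m)
      = 1 ^ m * (c - 1) ^ (c * m - m) * (c * m).choose m := by ring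
    _ ≤ _ := single_le_sum (f := fun i => 1 ^ i * (c - 1) ^ (c * m - i) * (c * m).choose i)
        (fun _ _ => Nat.zero_le _) hm

theorem pow_le_succ_mul_choose_mul_pow (c m : ℕ) (hc : 2 ≤ c) :
    c ^ (c * m) ≤ (c * m + 1) * ((c * m).choose m * (c - 1) ^ ((c - 1) * m)) := by
  obtain ⟨x, rfl⟩ : ∃ x, c = x + 1 := ⟨c - 1, by omega⟩
  have hsum := add_pow 1 x ((x + 1) * m)
  rw [add_comm 1 x] at hsum
  rw [hsum, Nat.add_sub_cancel, ← Nat.add_sub_cancel (x * m) m, ← Nat.add_one_mul]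
  calc ∑ i ∈ range ((x + 1) * m + 1), 1 ^ i * x ^ ((x + 1) * m - i) * ((x + 1) * m).choose i
      ≤ ∑ _i ∈ range ((x + 1) * m + 1), ((x + 1) * m).choose m * x ^ ((x + 1) * m - m) := by
        refine sum_le_sum fun i _ => ?_
        rw [one_pow, one_mul, mul_comm]
        exact choose_mul_pow_sub_le_choose_mul_pow_sub (by omega) i
    _ = _ := by rw [sum_const, card_range, smul_eq_mul]

end Nat

/-- `logb 2 (coveringBase v) = v log₂ (v/(v-1)) - (v-2) log₂ ((v-1)/(v-2))`. -/
noncomputable def coveringBase (v : ℕ) : ℝ :=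
  (v : ℝ) ^ v * ((v : ℝ) - 2) ^ (v - 2) / ((v : ℝ) - 1) ^ (2 * (v - 1))

theorem choose_mul_pow_le_choose_mul_pow (v m : ℕ) (hv : 2 ≤ v) :
    ((v - 1) * m).choose m * (v ^ v * (v - 2) ^ (v - 2)) ^ m
      ≤ (v * m + 1) * (v * m).choose m * ((v - 1) ^ (2 * (v - 1))) ^ m := by
  have upper := Nat.choose_mul_pow_le_pow (v - 1) m (by omega)
  have lower := Nat.pow_le_succ_mul_choose_mul_pow v m hv
  rw [show v - 1 - 1 = v - 2 by omega] at upper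
  calc ((v - 1) * m).choose m * (v ^ v * (v - 2) ^ (v - 2)) ^ m
      = ((v - 1) * m).choose m * (v - 2) ^ ((v - 2) * m) * v ^ (v * m) := by
        rw [mul_pow, ← pow_mul, ← pow_mul]; ring
    _ ≤ (v - 1) ^ ((v - 1) * m) * ((v * m + 1) * ((v * m).choose m * (v - 1) ^ ((v - 1) * m))) :=
        Nat.mul_le_mul upper lower
    _ = (v * m + 1) * (v * m).choose m * ((v - 1) ^ (2 * (v - 1))) ^ m := by
        rw [← pow_mul, mul_assoc, two_mul, Nat.add_mul (v - 1), pow_add]; ring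

theorem choose_mul_coveringBase_pow_le (v m : ℕ) (hv : 2 ≤ v) :
    (((v - 1) * m).choose m : ℝ) * coveringBase v ^ m ≤ (v * m + 1) * (v * m).choose m := by
  have hQ : (0 : ℝ) < ((v : ℝ) - 1) ^ (2 * (v - 1)) := pow_pos (by
    have : (2 : ℝ) ≤ v := by exact_mod_cast hv
    linarith) _
  have key : ((((v - 1) * m).choose m * (v ^ v * (v - 2) ^ (v - 2)) ^ m : ℕ) : ℝ)
      ≤ (((v * m + 1) * (v * m).choose m * ((v - 1) ^ (2 * (v - 1))) ^ m : ℕ) : ℝ) := by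
    exact_mod_cast choose_mul_pow_le_choose_mul_pow v m hv
  push_cast [Nat.cast_sub (show 1 ≤ v by omega), Nat.cast_sub hv] at key
  rw [coveringBase, div_pow, ← mul_div_assoc, div_le_iff₀ (pow_pos hQ m)]
  exact key

theorem one_lt_coveringBase {v : ℕ} (hv : 3 ≤ v) : 1 < coveringBase v := by
  have hv' : (3 : ℝ) ≤ v := by exact_mod_cast hv
  have h1 : (0 : ℝ) < v - 1 := by linarith
  have h2 : (0 : ℝ) < v - 2 := by linarith
  have convex := strictConvexOn_mul_log.2 (Set.mem_Ici.2 (by linarith : (0 : ℝ) ≤ v))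
    (Set.mem_Ici.2 h2.le) (by linarith : (v : ℝ) ≠ v - 2)
    (by norm_num : (0 : ℝ) < 1 / 2) (by norm_num : (0 : ℝ) < 1 / 2) (by norm_num)
  simp only [smul_eq_mul, show 1 / 2 * (v : ℝ) + 1 / 2 * (v - 2) = v - 1 by ring] at convex
  have hpos : 0 < coveringBase v := by unfold coveringBase; positivity
  rw [← log_pos_iff hpos.le, coveringBase, log_div (by positivity) (by positivity),
    log_mul (by positivity) (by positivity), log_pow, log_pow, log_pow]
  push_cast [Nat.cast_sub (show 1 ≤ v by omega), Nat.cast_sub (show 2 ≤ v by omega)]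
  linarith

theorem CAN_two_le_mul_of_choose_le {v k m : ℕ} (hv : 0 < v)
    (h : 4 * k * v ^ 2 * (v * m - m).choose m ≤ (v * m).choose m) : CAN 2 k v ≤ v * m := by
  have hfail := card_filter_balanced_product_not_coversAllPairs_mul_le
    (ι := Fin (v * m)) (β := Fin v) (m := m)
  simp only [Fintype.card_fin] at hfail
  obtain ⟨w, hw⟩ := exists_card_badPairs_mul_le (balanced_nonempty v m) hfail (2 * k)
  have hbad : #(badPairs w) ≤ k := by
    refine Nat.le_of_mul_le_mul_right (hw.trans ?_) (Nat.choose_pos (Nat.le_mul_of_pos_left m hv))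
    calc (2 * k) ^ 2 * (v ^ 2 * (v * m - m).choose m)
        = k * (4 * k * v ^ 2 * (v * m - m).choose m) := by ring
      _ ≤ k * (v * m).choose m := Nat.mul_le_mul_left k h
  exact CAN_two_le_of_card_badPairs_add_le w (by omega)

theorem CAN_two_le_mul_of_mul_le_pow {v k m : ℕ} (hv : 2 ≤ v)
    (h : 4 * (v : ℝ) ^ 3 * k * (m + 1) ≤ coveringBase v ^ m) : CAN 2 k v ≤ v * m := by
  refine CAN_two_le_mul_of_choose_le (by omega) ?_
  rw [← Nat.sub_one_mul]
  rcases Nat.eq_zero_or_pos k with rfl | hk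
  · simp
  have hv' : (2 : ℝ) ≤ v := by exact_mod_cast hv
  have hk' : (1 : ℝ) ≤ k := by exact_mod_cast hk
  have hρ : 0 < coveringBase v ^ m := lt_of_lt_of_le (by positivity) h
  have key := choose_mul_coveringBase_pow_le v m hv
  have : (4 * k * v ^ 2 * ((v - 1) * m).choose m : ℝ) ≤ (v * m).choose m := by
    refine le_of_mul_le_mul_right ?_ hρ
    calc (4 * k * v ^ 2 * ((v - 1) * m).choose m : ℝ) * coveringBase v ^ m
        = 4 * k * v ^ 2 * (((v - 1) * m).choose m * coveringBase v ^ m) := by ring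
      _ ≤ 4 * k * v ^ 2 * ((v * m + 1) * (v * m).choose m) :=
          mul_le_mul_of_nonneg_left key (by positivity)
      _ ≤ 4 * v ^ 3 * k * (m + 1) * (v * m).choose m := by
          rw [← sub_nonneg]
          have : (0 : ℝ) ≤ 4 * k * v ^ 2 * (v - 1) * (v * m).choose m := by
            have : (0 : ℝ) ≤ v - 1 := by linarith
            positivity
          linarith
      _ ≤ (v * m).choose m * coveringBase v ^ m := by
          rw [mul_comm ((v * m).choose m : ℝ)]
          exact mul_le_mul_of_nonneg_right h (Nat.cast_nonneg _)
  exact_mod_cast this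

theorem eventually_mul_log_add_le_rpow (α β : ℝ) {ε : ℝ} (hε : 0 < ε) :
    ∀ᶠ x in atTop, α * log x + β ≤ x ^ ε := by
  have hlo : (fun x => α * log x + β) =o[atTop] fun x => x ^ ε :=
    ((isLittleO_log_rpow_atTop hε).const_mul_left α).add <| Asymptotics.isLittleO_const_left.2 <|
      Or.inr (tendsto_norm_atTop_atTop.comp (tendsto_rpow_atTop hε))
  filter_upwards [hlo.bound one_pos, eventually_ge_atTop 0] with x hx hx0
  rw [one_mul, norm_of_nonneg (rpow_nonneg hx0 ε)] at hx
  exact (le_abs_self _).trans hx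

/-- With `m = ⌊(b/c) log₂ k⌋` one has `ρ ^ m ≥ k ^ (1 + ε) / ρ`, and `k ^ ε` absorbs the factor
`C (m + 1) ρ`, which is polylogarithmic in `k`. -/
theorem eventually_le_mul_logb_of_forall_le {g : ℕ → ℕ} {c C ρ : ℝ} (hc : 0 < c) (hC : 0 ≤ C)
    (hρ : 1 < ρ) (hg : ∀ k m : ℕ, C * k * (m + 1) ≤ ρ ^ m → (g k : ℝ) ≤ c * m) {b : ℝ}
    (hb : c / logb 2 ρ < b) : ∀ᶠ k : ℕ in atTop, (g k : ℝ) ≤ b * logb 2 k := by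
  have hD : 0 < logb 2 ρ := logb_pos one_lt_two hρ
  set a := b / c
  have haD : 1 < a * logb 2 ρ := by
    rw [div_lt_iff₀ hD] at hb
    rw [div_mul_eq_mul_div, one_lt_div hc]
    linarith
  have ha : 0 < a := div_pos (lt_trans (div_pos hc hD) hb) hc
  set ε := a * logb 2 ρ - 1 with hε
  have hpoly : ∀ᶠ k : ℕ in atTop, ρ * C * (a * logb 2 k + 1) ≤ (k : ℝ) ^ ε := by
    refine tendsto_natCast_atTop_atTop.eventually
      (p := fun x : ℝ => ρ * C * (a * logb 2 x + 1) ≤ x ^ ε) ?_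
    filter_upwards [eventually_mul_log_add_le_rpow (ρ * C * a / log 2) (ρ * C)
      (show 0 < ε by linarith)] with x hx
    convert hx using 1
    rw [logb]
    ring
  filter_upwards [hpoly, eventually_ge_atTop 2] with k hk hk2
  have hk2' : (2 : ℝ) ≤ k := by exact_mod_cast hk2
  set L := logb 2 (k : ℝ)
  have hL : 0 < L := logb_pos one_lt_two (by linarith)
  set m := ⌊a * L⌋₊
  have hm : (m : ℝ) ≤ a * L := Nat.floor_le (by positivity)
  have hm' : a * L - 1 ≤ m := by linarith [Nat.lt_floor_add_one (a * L)]
  have hpow : (k : ℝ) * (k ^ ε / ρ) ≤ ρ ^ m :=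
    calc (k : ℝ) * (k ^ ε / ρ) = ((2 : ℝ) ^ L) ^ (1 + ε) / ρ := by
          rw [rpow_logb two_pos one_lt_two.ne' (by linarith), rpow_add (by linarith), rpow_one]
          ring
      _ = ((2 : ℝ) ^ logb 2 ρ) ^ (a * L) / ρ := by
          rw [← rpow_mul zero_le_two, ← rpow_mul zero_le_two, hε]
          ring_nf
      _ = ρ ^ (a * L - 1) := by
          rw [rpow_logb two_pos one_lt_two.ne' (by linarith), rpow_sub_one (by linarith)]
      _ ≤ ρ ^ (m : ℝ) := rpow_le_rpow_of_exponent_le hρ.le hm'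
      _ = ρ ^ m := rpow_natCast _ _
  have hmρ : C * k * (m + 1) ≤ ρ ^ m := by
    refine le_trans ?_ hpow
    rw [mul_right_comm, mul_comm (k : ℝ)]
    gcongr
    rw [le_div_iff₀ (by linarith)]
    calc C * (m + 1) * ρ ≤ C * (a * L + 1) * ρ := by gcongr
      _ = ρ * C * (a * L + 1) := by ring
      _ ≤ k ^ ε := hk
  calc (g k : ℝ) ≤ c * m := hg k m hmρ
    _ ≤ c * (a * L) := by gcongr
    _ = b * L := by rw [← mul_assoc, mul_div_cancel₀ _ hc.ne']

theorem limsup_div_logb_le_of_forall_le {g : ℕ → ℕ} {c C ρ : ℝ} (hc : 0 < c) (hC : 0 ≤ C)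
    (hρ : 1 < ρ) (hg : ∀ k m : ℕ, C * k * (m + 1) ≤ ρ ^ m → (g k : ℝ) ≤ c * m) :
    limsup (fun k : ℕ => (g k : ℝ) / logb 2 k) atTop ≤ c / logb 2 ρ := by
  refine le_of_forall_gt_imp_ge_of_dense fun b hb => limsup_le_of_le ?_ ?_
  · exact isCoboundedUnder_le_of_le atTop fun k =>
      div_nonneg (Nat.cast_nonneg _) (div_nonneg (log_natCast_nonneg k) (log_nonneg one_le_two))
  · filter_upwards [eventually_le_mul_logb_of_forall_le hc hC hρ hg hb, eventually_ge_atTop 2]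
      with k hk hk2
    rw [div_le_iff₀ (logb_pos one_lt_two (by exact_mod_cast hk2))]
    exact hk

theorem d_two_v_upper_bound (v : ℕ) (hv : 3 ≤ v) :
    Filter.limsup (fun k : ℕ => (CAN 2 k v : ℝ) / Real.logb 2 k) Filter.atTop ≤
      (v : ℝ) / Real.logb 2
        ((v : ℝ) ^ v * ((v : ℝ) - 2) ^ (v - 2) / ((v : ℝ) - 1) ^ (2 * (v - 1))) :=
  limsup_div_logb_le_of_forall_le (c := v) (C := 4 * (v : ℝ) ^ 3)
    (by exact_mod_cast (by omega : 0 < v)) (by positivity) (one_lt_coveringBase hv)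
    fun _ _ h => by exact_mod_cast CAN_two_le_mul_of_mul_le_pow (by omega) h
end

section
/- For v ≥ 3, v·ln 2 / (v·ln(v/(v−1)) − (v−2)·ln((v−1)/(v−2))) < v(v−1)·ln 2, i.e. v / (v·log₂(v/(v−1)) − (v−2)·log₂((v−1)/(v−2))) < v(v−1)·ln 2, equivalently v·ln(v/(v−1)) − (v−2)·ln((v−1)/(v−2)) > 1/(v−1). -/
open Real Set

lemma aux_f (t : ℝ) (h0 : 0 < t) (h1 : t < 1) :
    2 * t < Real.log (1 + t) - Real.log (1 - t) := by
  have key : StrictMonoOn (fun s => Real.log (1 + s) - Real.log (1 - s) - 2 * s)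
      (Set.Ico (0:ℝ) 1) := by
    apply strictMonoOn_of_deriv_pos (convex_Ico 0 1)
    · apply ContinuousOn.sub
      apply ContinuousOn.sub
      · exact Real.continuousOn_log.comp (continuous_const.add continuous_id).continuousOn
          (fun s hs => by simp only [mem_compl_iff, mem_singleton_iff]; simp at hs ⊢; nlinarith [hs.1])
      · exact Real.continuousOn_log.comp (continuous_const.sub continuous_id).continuousOn
          (fun s hs => by simp only [mem_compl_iff, mem_singleton_iff]; simp at hs ⊢; nlinarith [hs.2])
      · exact (continuous_const.mul continuous_id).continuousOn
    · intro s hs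
      rw [interior_Ico] at hs
      obtain ⟨hs0, hs1⟩ := hs
      have h1s : (0:ℝ) < 1 + s := by linarith
      have h2s : (0:ℝ) < 1 - s := by linarith
      have d1 : HasDerivAt (fun s : ℝ => Real.log (1 + s)) (1 / (1 + s)) s := by
        have := ((hasDerivAt_id s).const_add 1).log h1s.ne'
        simpa using this
      have d2 : HasDerivAt (fun s : ℝ => Real.log (1 - s)) (-1 / (1 - s)) s := by
        have := ((hasDerivAt_id s).const_sub 1).log h2s.ne'
        simpa using this
      have d3 : HasDerivAt (fun s : ℝ => 2 * s) 2 s := by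
        simpa using (hasDerivAt_id s).const_mul 2
      have D : HasDerivAt (fun s => Real.log (1 + s) - Real.log (1 - s) - 2 * s)
          (1 / (1 + s) - (-1 / (1 - s)) - 2) s := (d1.sub d2).sub d3
      rw [D.deriv]
      rw [div_sub_div _ _ h1s.ne' h2s.ne']
      have : (1 : ℝ) * (1 - s) - (1 + s) * (-1) = 2 := by ring
      rw [this]
      have hprod : (0:ℝ) < (1 + s) * (1 - s) := mul_pos h1s h2s
      rw [sub_pos, lt_div_iff₀ hprod]
      nlinarith
  have := key (Set.mem_Ico.mpr ⟨le_refl 0, one_pos⟩) (Set.mem_Ico.mpr ⟨h0.le, h1⟩) h0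
  simp only [Real.log_one] at this
  simp at this
  linarith

lemma aux_g (t : ℝ) (h0 : 0 < t) (h1 : t < 1) :
    t ^ 2 < (1 + t) * Real.log (1 + t) + (1 - t) * Real.log (1 - t) := by
  have key : StrictMonoOn
      (fun s => (1 + s) * Real.log (1 + s) + (1 - s) * Real.log (1 - s) - s ^ 2)
      (Set.Ico (0:ℝ) 1) := by
    apply strictMonoOn_of_deriv_pos (convex_Ico 0 1)
    · apply ContinuousOn.sub
      apply ContinuousOn.add
      · exact (continuous_const.add continuous_id).continuousOn.mul
          (Real.continuousOn_log.comp (continuous_const.add continuous_id).continuousOn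
            (fun s hs => by simp at hs ⊢; nlinarith [hs.1]))
      · exact (continuous_const.sub continuous_id).continuousOn.mul
          (Real.continuousOn_log.comp (continuous_const.sub continuous_id).continuousOn
            (fun s hs => by simp at hs ⊢; nlinarith [hs.2]))
      · exact (continuous_pow 2).continuousOn
    · intro s hs
      rw [interior_Ico] at hs
      obtain ⟨hs0, hs1⟩ := hs
      have h1s : (0:ℝ) < 1 + s := by linarith
      have h2s : (0:ℝ) < 1 - s := by linarith
      have da : HasDerivAt (fun s : ℝ => 1 + s) 1 s := (hasDerivAt_id s).const_add 1
      have db : HasDerivAt (fun s : ℝ => 1 - s) (-1) s := by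
        simpa using (hasDerivAt_id s).const_sub 1
      have d1 : HasDerivAt (fun s : ℝ => (1 + s) * Real.log (1 + s))
          (1 * Real.log (1 + s) + (1 + s) * (1 * (1 + s)⁻¹)) s :=
        da.mul (da.log h1s.ne')
      have d2 : HasDerivAt (fun s : ℝ => (1 - s) * Real.log (1 - s))
          ((-1) * Real.log (1 - s) + (1 - s) * ((-1) * (1 - s)⁻¹)) s :=
        db.mul (db.log h2s.ne')
      have d3 : HasDerivAt (fun s : ℝ => s ^ 2) (2 * s) s := by
        simpa using hasDerivAt_pow 2 s
      have D := (d1.add d2).sub d3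
      have D' : HasDerivAt (fun s : ℝ => (1 + s) * Real.log (1 + s) + (1 - s) * Real.log (1 - s) - s ^ 2) _ s := D
      rw [D'.deriv]
      have e1 : (1 + s) * (1 * (1 + s)⁻¹) = 1 := by field_simp
      have e2 : (1 - s) * ((-1) * (1 - s)⁻¹) = -1 := by field_simp
      rw [e1, e2]
      have := aux_f s hs0 hs1
      ring_nf
      ring_nf at this
      linarith
  have := key (Set.mem_Ico.mpr ⟨le_refl 0, one_pos⟩) (Set.mem_Ico.mpr ⟨h0.le, h1⟩) h0
  simp only [Real.log_one] at this
  simp at this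
  nlinarith [this]


theorem corollary_bound_lt_quadratic (v : ℕ) (hv : 3 ≤ v) :
    1 / ((v : ℝ) - 1) <
      (v : ℝ) * Real.log ((v : ℝ) / ((v : ℝ) - 1)) -
        ((v : ℝ) - 2) * Real.log (((v : ℝ) - 1) / ((v : ℝ) - 2)) := by
  have hv3 : (3:ℝ) ≤ (v:ℝ) := by exact_mod_cast hv
  set x : ℝ := (v:ℝ) - 1 with hx
  have hx2 : (2:ℝ) ≤ x := by simp [hx]; linarith
  have hx0 : (0:ℝ) < x := by linarith
  set t : ℝ := 1 / x with ht
  have ht0 : 0 < t := by positivity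
  have ht1 : t < 1 := by rw [ht, div_lt_one hx0]; linarith
  have hg := aux_g t ht0 ht1
  have hxm1 : (0:ℝ) < x - 1 := by linarith
  have e1 : (v:ℝ) / ((v:ℝ) - 1) = 1 + t := by
    rw [ht]; field_simp [hx]
    rw [← hx, mul_div_assoc, div_self hx0.ne', mul_one]; linarith
  have e2 : Real.log (((v:ℝ)-1)/((v:ℝ)-2)) = - Real.log (1 - t) := by
    have h1 : (1:ℝ) - t = (x-1)/x := by rw [ht]; field_simp
    have h2 : ((v:ℝ)-1)/((v:ℝ)-2) = x/(x-1) := by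
      have : (v:ℝ) - 2 = x - 1 := by rw [hx]; ring
      rw [this, ← hx]
    rw [h1, h2, ← Real.log_inv, inv_div]
  have key : (1:ℝ)/x < (x+1) * Real.log (1+t) + (x-1) * Real.log (1-t) := by
    calc (1:ℝ)/x = x * t^2 := by rw [ht]; field_simp
    _ < x * ((1+t)*Real.log (1+t) + (1-t)*Real.log (1-t)) :=
        (mul_lt_mul_iff_right₀ hx0).mpr hg
    _ = (x+1) * Real.log (1+t) + (x-1) * Real.log (1-t) := by
        rw [ht]
        have a1 : x * (1 + 1/x) = x + 1 := by field_simp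
        have a2 : x * (1 - 1/x) = x - 1 := by field_simp
        rw [mul_add, ← mul_assoc, ← mul_assoc, a1, a2]
  rw [e1, e2]
  have ev : (v:ℝ) = x + 1 := by rw [hx]; ring
  have ev2 : (v:ℝ) - 2 = x - 1 := by rw [hx]; ring
  rw [ev, show x + 1 - 2 = x - 1 from by ring, ht]
  linarith [key]
end

section
/- Given positive integers N, t, k, v with t ≥ 2 and a set ℐ ⊆ V^N of admissible columns (|V| = v), if (t/(t−1))^t · (t−1) · C₁ < |ℐ|^t, where C₁ = C(k, t−1) · |𝒜_t| and 𝒜_t is the set of N×t arrays with columns in ℐ that fail to contain some element of V^t among their rows, then there exists an N×k covering array of strength t over V all of whose columns lie in ℐ. -/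
open Finset Function

theorem Nat.choose_add_mul_pow_le {n s d : ℕ} (hd : s * d ≤ n + 1 - s) :
    (n + d).choose s * s ^ s ≤ (s + 1) ^ s * n.choose s := by
  -- compare `s ! * (n + d).choose s = ∏ i < s, (n + d - i)` with `s ! * n.choose s` factorwise
  have termwise : ∀ i ∈ range s, s * (n + d - i) ≤ (s + 1) * (n - i) := by
    intro i hi
    rw [mem_range] at hi
    rcases le_or_gt s n with hsn | hns
    · have hdi : s * d ≤ n - i := by omega
      rw [show n + d - i = (n - i) + d by omega]
      nlinarith
    · obtain rfl : d = 0 := (Nat.mul_eq_zero.1 (show s * d = 0 by omega)).resolve_left (by omega)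
      rw [add_zero]
      exact Nat.mul_le_mul_right _ s.le_succ
  have hprod := prod_le_prod (fun i _ => Nat.zero_le _) termwise
  rw [prod_mul_distrib, prod_mul_distrib, prod_const, prod_const, card_range,
    ← Nat.descFactorial_eq_prod_range, ← Nat.descFactorial_eq_prod_range,
    Nat.descFactorial_eq_factorial_mul_choose, Nat.descFactorial_eq_factorial_mul_choose] at hprod
  refine Nat.le_of_mul_le_mul_left ?_ s.factorial_pos
  linarith

theorem Nat.exists_choose_succ_add_mul_pow_le {s : ℕ} (hs : 0 < s) (k : ℕ) :
    ∃ d, (k + d).choose (s + 1) * s ^ s ≤ (d + 1) * (s + 1) ^ s * k.choose s := by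
  have hd : s * ((k + 1 - s) / s) ≤ k + 1 - s := Nat.mul_div_le _ _
  have hd_succ := Nat.lt_mul_div_succ (k + 1 - s) hs
  generalize (k + 1 - s) / s = d at hd hd_succ
  have hd' : k + d - s ≤ (d + 1) * (s + 1) := by
    have : k + d - s ≤ s * (d + 1) + d := by omega
    nlinarith
  refine ⟨d, Nat.le_of_mul_le_mul_right ?_ (Nat.succ_pos s)⟩
  calc (k + d).choose (s + 1) * s ^ s * (s + 1)
      = (k + d).choose s * s ^ s * (k + d - s) := by
        rw [mul_right_comm, Nat.choose_succ_right_eq]; ring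
    _ ≤ (s + 1) ^ s * k.choose s * ((d + 1) * (s + 1)) :=
        Nat.mul_le_mul (Nat.choose_add_mul_pow_le hd) hd'
    _ = (d + 1) * (s + 1) ^ s * k.choose s * (s + 1) := by ring

theorem Nat.exists_choose_succ_add_le {s : ℕ} (hs : 0 < s) (k : ℕ) :
    ∃ d : ℕ, ((k + d).choose (s + 1) : ℝ) ≤
      (d + 1) * ((((s : ℝ) + 1) / s) ^ (s + 1) * s * k.choose s) := by
  obtain ⟨d, hd⟩ := Nat.exists_choose_succ_add_mul_pow_le hs k
  refine ⟨d, ?_⟩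
  have hs' : (0 : ℝ) < s := by exact_mod_cast hs
  have hd' : ((k + d).choose (s + 1) : ℝ) * s ^ s ≤ (d + 1) * (s + 1) ^ s * k.choose s := by
    exact_mod_cast hd
  rw [← mul_le_mul_iff_of_pos_right (pow_pos hs' s)]
  calc ((k + d).choose (s + 1) : ℝ) * s ^ s ≤ (d + 1) * (s + 1) ^ s * k.choose s := hd'
    _ ≤ (d + 1) * (s + 1) ^ s * k.choose s * (s + 1) :=
        le_mul_of_one_le_right (by positivity) (by linarith)
    _ = _ := by rw [div_pow]; field_simp; ring

theorem Finset.exists_le_card_forall_not_subset {ι : Type*} [Fintype ι]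
    (B : Finset (Finset ι)) (hB : ∀ S ∈ B, S.Nonempty) :
    ∃ R : Finset ι, Fintype.card ι - #B ≤ #R ∧ ∀ S ∈ B, ¬S ⊆ R := by
  classical
  choose p hp using hB
  refine ⟨(B.attach.image fun S => p S.1 S.2)ᶜ, ?_, fun S hS hSR => ?_⟩
  · have := card_image_le (s := B.attach) (f := fun S => p S.1 S.2)
    rw [card_attach] at this
    rw [card_compl]
    omega
  · exact mem_compl.1 (hSR (hp S hS)) (mem_image_of_mem _ (mem_attach B ⟨S, hS⟩))

section Covering

variable {ρ α : Type*}

def CoversTuples {κ : Type*} (A : κ → ρ → α) : Prop :=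
  ∀ a : κ → α, ∃ r, ∀ i, A i r = a i

theorem coversTuples_comp_equiv {κ κ' : Type*} (e : κ' ≃ κ) {A : κ → ρ → α} :
    CoversTuples (A ∘ e) ↔ CoversTuples A := by
  refine ⟨fun h a => ?_, fun h a => ?_⟩
  · obtain ⟨r, hr⟩ := h (a ∘ e)
    exact ⟨r, fun i => by simpa using hr (e.symm i)⟩
  · obtain ⟨r, hr⟩ := h (a ∘ e.symm)
    exact ⟨r, fun i => by simpa using hr (e i)⟩

def CoversTuplesOn {ι : Type*} (f : ι → ρ → α) (S : Finset ι) : Prop :=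
  CoversTuples fun x : S => f x

theorem CoversTuplesOn.comp_injective [Nonempty α] {ι κ : Type*} {f : ι → ρ → α}
    {S : Finset ι} (h : CoversTuplesOn f S) {g : κ → ι} (hg : Injective g)
    (hgS : ∀ i, g i ∈ S) : CoversTuples (f ∘ g) := by
  intro a
  obtain ⟨r, hr⟩ := h fun x => extend g a (fun _ => Classical.arbitrary α) x
  exact ⟨r, fun i => by simpa [hg.extend_apply] using hr ⟨g i, hgS i⟩⟩

variable (I : Finset (ρ → α))

/-- The paper's `𝒜_t`, for `t = card κ`. -/
def MissingArrays (κ : Type*) : Type _ :=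
  {A : κ → I // ¬CoversTuples fun i => (A i : ρ → α)}

theorem card_missingArrays_congr {κ κ' : Type*} (e : κ ≃ κ') :
    Nat.card (MissingArrays I κ) = Nat.card (MissingArrays I κ') :=
  Nat.card_congr <| Equiv.subtypeEquiv (e.arrowCongr (Equiv.refl I)) fun A => by
    rw [← coversTuples_comp_equiv e.symm]; rfl

theorem card_missingArrays_eq {κ : Type*} :
    Nat.card (MissingArrays I κ) = Nat.card {A : κ → ρ → α //
      (∀ i, A i ∈ I) ∧ ∃ a : κ → α, ∀ r, ∃ i, A i r ≠ a i} := by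
  refine Nat.card_congr ((Equiv.subtypeEquiv (Equiv.subtypePiEquivPi).symm ?_).trans
    (Equiv.subtypeSubtypeEquivSubtypeInter _ _))
  intro A
  simp only [CoversTuples, not_forall, not_exists]
  rfl

theorem card_not_coversTuples_restrict {ι : Type*} [Fintype ι] (S : Finset ι) :
    Nat.card {F : ι → I // ¬CoversTuplesOn (Subtype.val ∘ F) S} =
      Nat.card (MissingArrays I S) * #I ^ (Fintype.card ι - #S) := by
  classical
  let e : {F : ι → I // ¬CoversTuplesOn (Subtype.val ∘ F) S} ≃
      MissingArrays I S × ({x // x ∉ S} → I) :=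
    (Equiv.subtypeEquiv (Equiv.piEquivPiSubtypeProd (· ∈ S) fun _ => I) fun F => Iff.rfl).trans
      (Equiv.prodSubtypeFstEquivSubtypeProd
        (p := fun G : S → I => ¬CoversTuples fun x => (G x : ρ → α)))
  rw [Nat.card_congr e, Nat.card_prod, Nat.card_fun]
  simp only [MissingArrays, Nat.card_eq_fintype_card, Fintype.card_coe,
    Fintype.card_subtype_compl]

open scoped Classical in
noncomputable def uncoveredSets {ι : Type*} [Fintype ι] (f : ι → ρ → α) (t : ℕ) :
    Finset (Finset ι) :=
  {S ∈ powersetCard t univ | ¬CoversTuplesOn f S}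

variable {I}

open scoped Classical in
theorem exists_card_uncoveredSets_le {ι : Type*} [Fintype ι] (hI : I.Nonempty) {t d : ℕ}
    (h : (Fintype.card ι).choose t * Nat.card (MissingArrays I (Fin t)) < (d + 1) * #I ^ t) :
    ∃ F : ι → I, #(uncoveredSets (Subtype.val ∘ F) t) ≤ d := by
  set m := Fintype.card ι
  set M := Nat.card (MissingArrays I (Fin t))
  have hfiber : ∀ S ∈ powersetCard t univ,
      #{F : ι → I | ¬CoversTuplesOn (Subtype.val ∘ F) S} = M * #I ^ (m - t) := by
    intro S hS
    have hSt := (mem_powersetCard.1 hS).2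
    rw [← Fintype.card_subtype, ← Nat.card_eq_fintype_card, card_not_coversTuples_restrict,
      card_missingArrays_congr I (S.equivFinOfCardEq hSt), hSt]
  have hsum : ∑ F : ι → I, #(uncoveredSets (Subtype.val ∘ F) t) =
      m.choose t * (M * #I ^ (m - t)) := by
    calc _ = ∑ S ∈ powersetCard t univ,
            #{F : ι → I | ¬CoversTuplesOn (Subtype.val ∘ F) S} :=
          sum_card_bipartiteAbove_eq_sum_card_bipartiteBelow _
      _ = m.choose t * (M * #I ^ (m - t)) := by
          rw [sum_congr rfl hfiber, sum_const, card_powersetCard, card_univ, smul_eq_mul]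
  have hlt :
      ∑ F : ι → I, #(uncoveredSets (Subtype.val ∘ F) t) < ∑ _F : ι → I, (d + 1) := by
    rw [hsum, sum_const, card_univ, Fintype.card_fun, Fintype.card_coe, smul_eq_mul]
    rcases le_or_gt t m with htm | htm
    · calc m.choose t * (M * #I ^ (m - t)) = m.choose t * M * #I ^ (m - t) := by ring
        _ < (d + 1) * #I ^ t * #I ^ (m - t) := Nat.mul_lt_mul_of_pos_right h (by positivity)
        _ = #I ^ m * (d + 1) := by rw [mul_assoc, ← pow_add, Nat.add_sub_cancel' htm, mul_comm]
    · simp only [Nat.choose_eq_zero_of_lt htm, zero_mul]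
      positivity
  obtain ⟨F, -, hF⟩ := exists_lt_of_sum_lt hlt
  exact ⟨F, Nat.lt_succ_iff.1 hF⟩

theorem exists_columns_forall_coversTuples (hI : I.Nonempty) {t k d : ℕ} (ht : 0 < t)
    (h : (k + d).choose t * Nat.card (MissingArrays I (Fin t)) < (d + 1) * #I ^ t) :
    ∃ g : Fin k → ρ → α, (∀ j, g j ∈ I) ∧
      ∀ cols : Fin t → Fin k, Injective cols → CoversTuples (g ∘ cols) := by
  classical
  obtain ⟨F, hF⟩ := exists_card_uncoveredSets_le (ι := Fin (k + d)) hI (by simpa using h)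
  obtain ⟨R, hR, hRB⟩ := exists_le_card_forall_not_subset (uncoveredSets (Subtype.val ∘ F) t)
    fun S hS => card_pos.1 ((mem_powersetCard.1 (mem_filter.1 hS).1).2 ▸ ht)
  have hkR : k ≤ #R := by simp at hR; omega
  let e : Fin k ↪ Fin (k + d) :=
    (Fin.castLEEmb hkR).trans (R.equivFin.symm.toEmbedding.trans (Embedding.subtype _))
  have he : ∀ j, e j ∈ R := fun j => (R.equivFin.symm _).2
  refine ⟨fun j => F (e j), fun j => (F (e j)).2, fun cols hcols a => ?_⟩
  have : Nonempty α := ⟨a ⟨0, ht⟩⟩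
  let S := univ.map ((⟨cols, hcols⟩ : Fin t ↪ Fin k).trans e)
  have hS : S ∈ powersetCard t univ := by simp [S]
  have hSR : S ⊆ R := by
    intro x hx
    obtain ⟨i, -, rfl⟩ := mem_map.1 hx
    exact he _
  have hcov : CoversTuplesOn (Subtype.val ∘ F) S := by
    by_contra hbad
    exact hRB S (mem_filter.2 ⟨hS, hbad⟩) hSR
  exact hcov.comp_injective (e.injective.comp hcols) (fun i => by simp [S]) a

end Covering

theorem CA_existence_entropy_compression_general (N t k v : ℕ)
    (ht : 2 ≤ t)
    (I : Finset (Fin N → Fin v)) (hI : I.Nonempty)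
    (h : ((t : ℝ) / ((t : ℝ) - 1)) ^ t * ((t : ℝ) - 1) *
        ((k.choose (t - 1) : ℝ) *
          (Nat.card {A : Fin t → (Fin N → Fin v) //
            (∀ i, A i ∈ I) ∧
            ∃ a : Fin t → Fin v, ∀ r : Fin N, ∃ i, A i r ≠ a i} : ℝ)) <
        (I.card : ℝ) ^ t) :
    ∃ A : Fin N → Fin k → Fin v,
      (∀ j : Fin k, (fun r => A r j) ∈ I) ∧ IsCoveringArray t A := by
  obtain ⟨s, rfl⟩ : ∃ s, t = s + 1 := ⟨t - 1, by omega⟩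
  obtain ⟨d, hd⟩ := Nat.exists_choose_succ_add_le (by omega : 0 < s) k
  have hcount : (k + d).choose (s + 1) * Nat.card (MissingArrays I (Fin (s + 1))) <
      (d + 1) * #I ^ (s + 1) := by
    rw [← card_missingArrays_eq] at h
    push_cast at h
    simp only [add_tsub_cancel_right] at h
    generalize Nat.card (MissingArrays I (Fin (s + 1))) = M at h ⊢
    have hreal : ((k + d).choose (s + 1) * M : ℝ) < (d + 1) * #I ^ (s + 1) :=
      calc ((k + d).choose (s + 1) * M : ℝ)
          ≤ (d + 1) * (((s + 1) / s) ^ (s + 1) * s * k.choose s) * M := by gcongr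
        _ = (d + 1) * (((s + 1) / s) ^ (s + 1) * s * (k.choose s * M)) := by ring
        _ < (d + 1) * #I ^ (s + 1) := by gcongr
    exact_mod_cast hreal
  obtain ⟨g, hgI, hg⟩ := exists_columns_forall_coversTuples hI (Nat.succ_pos s) hcount
  exact ⟨fun r j => g j r, hgI, fun cols hcols => hg cols hcols⟩

theorem CA_existence_entropy_compression (N t k v : ℕ)
    (hN : 0 < N) (ht : 2 ≤ t) (hk : 0 < k) (hv : 0 < v)
    (I : Finset (Fin N → Fin v)) (hI : I.Nonempty)
    (h : ((t : ℝ) / ((t : ℝ) - 1)) ^ t * ((t : ℝ) - 1) *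
        ((k.choose (t - 1) : ℝ) *
          (Nat.card {A : Fin t → (Fin N → Fin v) //
            (∀ i, A i ∈ I) ∧
            ∃ a : Fin t → Fin v, ∀ r : Fin N, ∃ i, A i r ≠ a i} : ℝ)) <
        (I.card : ℝ) ^ t) :
    ∃ A : Fin N → Fin k → Fin v,
      (∀ j : Fin k, (fun r => A r j) ∈ I) ∧ IsCoveringArray t A :=
  CA_existence_entropy_compression_general N t k v ht I hI h
end
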